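/- arXiv:2503.15789 — 9 statements merged into one kernel-verified Lean document; each statement's English description precedes it below -/
import Mathlib

section
/- Let 0 < θ < 1 be a real number. There exists a constant C > 0 (depending only on θ) such that for every real number α and every positive integer n, min_{1 ≤ a ≤ n} ‖ a^θ − α ‖ ≤ C · n^{θ−1}, where the minimum is over integers a with 1 ≤ a ≤ n. -/
/-!
For large `n` the numbers `a ^ θ` with `n / 2 ≤ a ≤ n` increase by more than `1` in total
(as `n ^ θ - (n / 2) ^ θ = (1 - 2 ^ (-θ)) n ^ θ → ∞`), while consecutive ones differ by at most
`θ a ^ (θ - 1) ≤ 3 n ^ (θ - 1)`. Hence they cannot jump over the whole class `α + ℤ`: some `a ^ θ`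
lies within one step below a point of `α + ℤ`. For the finitely many small `n` the trivial bound
`‖x‖ ≤ 1 / 2` suffices.
-/

/-- Distance from a real number to the nearest integer. -/
noncomputable def distNearestInt (x : ℝ) : ℝ := |x - round x|

open Filter

lemma distNearestInt_le_half (x : ℝ) : distNearestInt x ≤ 1 / 2 :=
  abs_sub_round x

lemma distNearestInt_le_abs_sub_intCast (x : ℝ) (k : ℤ) : distNearestInt x ≤ |x - k| :=
  round_le x k

lemma Nat.exists_le_lt_succ_of_le_of_lt {α : Type*} [LinearOrder α] (f : ℕ → α) {β : α}
    {m n : ℕ} (hmn : m ≤ n) (hm : f m ≤ β) (hn : β < f n) :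
    ∃ a, m ≤ a ∧ a < n ∧ f a ≤ β ∧ β < f (a + 1) := by
  induction n, hmn using Nat.le_induction with
  | base => exact absurd hn hm.not_gt
  | succ n hmn ih =>
    by_cases hfn : f n ≤ β
    · exact ⟨n, hmn, n.lt_succ_self, hfn, hn⟩
    · obtain ⟨a, hma, han, hfa, hfa1⟩ := ih (not_le.mp hfn)
      exact ⟨a, hma, han.trans n.lt_succ_self, hfa, hfa1⟩

lemma exists_distNearestInt_sub_le_of_rise (f : ℕ → ℝ) {m n : ℕ} {δ : ℝ} (hmn : m ≤ n)
    (hrise : f m + 1 ≤ f n) (hstep : ∀ a, m ≤ a → a < n → f (a + 1) - f a ≤ δ) (α : ℝ) :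
    ∃ a, m ≤ a ∧ a < n ∧ distNearestInt (f a - α) ≤ δ := by
  set k : ℤ := ⌈f m - α⌉
  have hk_ge : f m - α ≤ k := Int.le_ceil _
  have hk_lt : (k : ℝ) < f m - α + 1 := Int.ceil_lt_add_one _
  obtain ⟨a, hma, han, hfa, hfa1⟩ :=
    Nat.exists_le_lt_succ_of_le_of_lt f hmn (by linarith : f m ≤ α + k) (by linarith)
  refine ⟨a, hma, han, ?_⟩
  calc distNearestInt (f a - α) ≤ |f a - α - k| := distNearestInt_le_abs_sub_intCast _ k
    _ = α + k - f a := by rw [abs_of_nonpos (by linarith)]; ring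
    _ ≤ δ := by linarith [hstep a hma han]

lemma Real.add_one_rpow_sub_rpow_le {x θ : ℝ} (hx : 0 < x) (hθ0 : 0 ≤ θ) (hθ1 : θ ≤ 1) :
    (x + 1) ^ θ - x ^ θ ≤ θ * x ^ (θ - 1) := by
  have hbernoulli : (1 + x⁻¹) ^ θ ≤ 1 + θ * x⁻¹ :=
    rpow_one_add_le_one_add_mul_self (by linarith [inv_nonneg.mpr hx.le]) hθ0 hθ1
  have hsplit : x + 1 = x * (1 + x⁻¹) := by field_simp
  rw [hsplit, Real.mul_rpow hx.le (by positivity), Real.rpow_sub_one hx.ne']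
  calc x ^ θ * (1 + x⁻¹) ^ θ - x ^ θ ≤ x ^ θ * (1 + θ * x⁻¹) - x ^ θ := by
        gcongr
    _ = θ * (x ^ θ / x) := by ring

lemma Real.rpow_sub_one_le_mul_rpow_sub_one {x y c s : ℝ} (hx : 0 < x) (hs : 0 ≤ s)
    (hxy : x ≤ y) (hyx : y ≤ c * x) : x ^ (s - 1) ≤ c * y ^ (s - 1) := by
  have hy : 0 < y := hx.trans_le hxy
  rw [Real.rpow_sub_one hx.ne', Real.rpow_sub_one hy.ne', div_le_iff₀ hx]
  calc x ^ s ≤ y ^ s := by gcongr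
    _ = y ^ s / y * y := by field_simp
    _ ≤ y ^ s / y * (c * x) := by gcongr
    _ = c * (y ^ s / y) * x := by ring

lemma exists_distNearestInt_rpow_sub_le {θ : ℝ} (hθ0 : 0 ≤ θ) (hθ1 : θ ≤ 1) {n : ℕ}
    (hn : 2 ≤ n) (hlarge : 1 ≤ (1 - 2 ^ (-θ)) * (n : ℝ) ^ θ) (α : ℝ) :
    ∃ a : ℕ, 1 ≤ a ∧ a ≤ n ∧ distNearestInt ((a : ℝ) ^ θ - α) ≤ 3 * (n : ℝ) ^ (θ - 1) := by
  have hhalf : ((n / 2 : ℕ) : ℝ) ≤ n / 2 := by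
    rw [le_div_iff₀ two_pos]; exact_mod_cast Nat.div_mul_le_self n 2
  have hrise : ((n / 2 : ℕ) : ℝ) ^ θ + 1 ≤ (n : ℝ) ^ θ :=
    calc ((n / 2 : ℕ) : ℝ) ^ θ + 1 ≤ ((n : ℝ) / 2) ^ θ + 1 := by gcongr
      _ = 2 ^ (-θ) * (n : ℝ) ^ θ + 1 := by
        rw [Real.div_rpow (by positivity) zero_le_two, Real.rpow_neg zero_le_two]; ring
      _ ≤ (n : ℝ) ^ θ := by linarith
  have hstep : ∀ a, n / 2 ≤ a → a < n →
      ((a + 1 : ℕ) : ℝ) ^ θ - (a : ℝ) ^ θ ≤ 3 * (n : ℝ) ^ (θ - 1) := by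
    intro a ha _
    have ha_pos : (0 : ℝ) < a := by exact_mod_cast (by omega : 0 < a)
    have ha_third : (n : ℝ) ≤ 3 * a := by exact_mod_cast (by omega : n ≤ 3 * a)
    push_cast
    calc ((a : ℝ) + 1) ^ θ - (a : ℝ) ^ θ ≤ θ * (a : ℝ) ^ (θ - 1) :=
          Real.add_one_rpow_sub_rpow_le ha_pos hθ0 hθ1
      _ ≤ 1 * (a : ℝ) ^ (θ - 1) := by gcongr
      _ ≤ 3 * (n : ℝ) ^ (θ - 1) := by
        rw [one_mul]
        exact Real.rpow_sub_one_le_mul_rpow_sub_one ha_pos hθ0 (by exact_mod_cast (by omega))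
          ha_third
  obtain ⟨a, ha, han, hdist⟩ := exists_distNearestInt_sub_le_of_rise (fun a : ℕ ↦ (a : ℝ) ^ θ)
    (Nat.div_le_self n 2) hrise hstep α
  exact ⟨a, by omega, han.le, hdist⟩

lemma Real.inv_le_rpow_sub_one {x θ : ℝ} (hx : 1 ≤ x) (hθ : 0 ≤ θ) : x⁻¹ ≤ x ^ (θ - 1) := by
  rw [← Real.rpow_neg_one]
  exact Real.rpow_le_rpow_of_exponent_le hx (by linarith)

theorem stmt_2 (θ : ℝ) (hθ : 0 < θ) (hθ1 : θ < 1) :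
    ∃ C : ℝ, 0 < C ∧ ∀ (α : ℝ) (n : ℕ), 0 < n →
      ∃ a : ℕ, 1 ≤ a ∧ a ≤ n ∧
        distNearestInt ((a : ℝ) ^ θ - α) ≤ C * (n : ℝ) ^ (θ - 1) := by
  have hc : 0 < 1 - (2 : ℝ) ^ (-θ) := by
    linarith [Real.rpow_lt_one_of_one_lt_of_neg one_lt_two (neg_neg_of_pos hθ)]
  have hgrowth : Tendsto (fun n : ℕ ↦ (1 - (2 : ℝ) ^ (-θ)) * (n : ℝ) ^ θ) atTop atTop :=
    ((tendsto_rpow_atTop hθ).comp tendsto_natCast_atTop_atTop).const_mul_atTop hc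
  obtain ⟨N, hN⟩ := eventually_atTop.mp
    ((eventually_ge_atTop 2).and (hgrowth.eventually_ge_atTop 1))
  refine ⟨N + 3, by positivity, fun α n hn ↦ ?_⟩
  have hn_pow : 0 ≤ (n : ℝ) ^ (θ - 1) := by positivity
  rcases lt_or_ge n N with hnN | hNn
  · refine ⟨1, le_rfl, hn, ?_⟩
    have hn1 : (1 : ℝ) ≤ n := by exact_mod_cast hn
    have hnN' : (n : ℝ) ≤ N := by exact_mod_cast hnN.le
    calc distNearestInt (((1 : ℕ) : ℝ) ^ θ - α) ≤ 1 / 2 := distNearestInt_le_half _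
      _ ≤ (N + 3) * (n : ℝ)⁻¹ := by
        rw [← div_eq_mul_inv, le_div_iff₀ (by positivity)]; linarith
      _ ≤ (N + 3) * (n : ℝ) ^ (θ - 1) := by gcongr; exact Real.inv_le_rpow_sub_one hn1 hθ.le
  · obtain ⟨a, ha, han, hdist⟩ :=
      exists_distNearestInt_rpow_sub_le hθ.le hθ1.le (hN n hNn).1 (hN n hNn).2 α
    exact ⟨a, ha, han, hdist.trans (by gcongr; linarith)⟩
end

section
/- Let θ be a real number with θ ∈ (0,1) ∪ (1, 3/2). There exists a constant C > 0 (depending only on θ) such that for every real number α and every positive integer n, min_{1 ≤ u, v ≤ n} ‖ u^θ + v^θ − α ‖ ≤ C · n^{θ − 3/2}, where the minimum is over pairs of integers u, v with 1 ≤ u, v ≤ n. -/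
set_option maxHeartbeats 2000000

private lemma dist_round_le (x : ℝ) (M : ℤ) : |x - round x| ≤ |x - M| := by
  rcases eq_or_ne M (round x) with h | h
  · rw [h]
  · have h1 : (1 : ℝ) ≤ |(M : ℝ) - round x| := by
      have h0 : (1 : ℤ) ≤ |M - round x| := Int.one_le_abs (by omega)
      calc (1:ℝ) ≤ ((|M - round x| : ℤ) : ℝ) := by exact_mod_cast h0
        _ = |(M : ℝ) - round x| := by push_cast; ring_nf
    have h2 := abs_sub_round x
    have h3 : |(M:ℝ) - round x| ≤ |x - M| + |x - round x| := by
      calc |(M:ℝ) - round x| = |(x - (round x:ℝ)) - (x - M)| := by ring_nf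
        _ ≤ |x - (round x:ℝ)| + |x - M| := abs_sub _ _
        _ = |x - M| + |x - round x| := by ring
    linarith

private lemma mvt_rpow (p : ℝ) {x y : ℝ} (hx : 0 < x) (hxy : x < y) :
    ∃ c ∈ Set.Ioo x y, y ^ p - x ^ p = (y - x) * (p * c ^ (p - 1)) := by
  obtain ⟨c, hc, hceq⟩ := exists_hasDerivAt_eq_slope (fun t => t ^ p)
    (fun t => p * t ^ (p - 1)) hxy
    (by
      apply ContinuousOn.rpow_const continuousOn_id
      intro t ht
      rw [Set.mem_Icc] at ht
      exact Or.inl (by simp only [id]; nlinarith [ht.1]))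
    (fun t ht => Real.hasDerivAt_rpow_const (Or.inl (by rw [Set.mem_Ioo] at ht; nlinarith [ht.1])))
  refine ⟨c, hc, ?_⟩
  rw [hceq, mul_comm, div_mul_cancel₀]
  exact sub_ne_zero_of_ne (ne_of_gt hxy)

private lemma mvt_second (θ : ℝ) {x y : ℝ} (hx : 0 < x) (hxy : x < y) :
    ∃ d ∈ Set.Ioo x (y + 1),
      ((y+1)^θ - y^θ) - ((x+1)^θ - x^θ) = (y - x) * (θ * ((θ-1) * d ^ (θ-2))) := by
  obtain ⟨c, hc, hceq⟩ := exists_hasDerivAt_eq_slope (fun t => (t+1) ^ θ - t ^ θ)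
    (fun t => θ * (t+1) ^ (θ-1) - θ * t ^ (θ-1)) hxy
    (by
      apply ContinuousOn.sub
      · apply ContinuousOn.rpow_const (by fun_prop)
        intro t ht
        rw [Set.mem_Icc] at ht
        exact Or.inl (by nlinarith [ht.1])
      · apply ContinuousOn.rpow_const continuousOn_id
        intro t ht
        rw [Set.mem_Icc] at ht
        exact Or.inl (by simp only [id]; nlinarith [ht.1]))
    (by
      intro t ht
      rw [Set.mem_Ioo] at ht
      have h1 : HasDerivAt (fun t : ℝ => (t+1) ^ θ) (θ * (t+1) ^ (θ-1)) t := by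
        have := (Real.hasDerivAt_rpow_const (x := t+1) (p := θ)
          (Or.inl (by nlinarith [ht.1]))).comp t ((hasDerivAt_id t).add_const 1)
        simpa [Function.comp_def] using this
      exact h1.sub (Real.hasDerivAt_rpow_const (Or.inl (by nlinarith [ht.1]))))
  have hc1 : 0 < c := lt_trans hx hc.1
  obtain ⟨d, hd, hdeq⟩ := mvt_rpow (θ - 1) hc1 (by linarith : c < c + 1)
  refine ⟨d, ⟨lt_trans hc.1 hd.1, by rcases hd with ⟨_, h2⟩; rcases hc with ⟨_, h4⟩; linarith⟩, ?_⟩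
  have key : θ * (c+1) ^ (θ-1) - θ * c ^ (θ-1) = θ * ((θ-1) * d ^ (θ-2)) := by
    have h5 : (c+1)^(θ-1) - c^(θ-1) = (θ-1) * d^(θ-1-1) := by linarith [hdeq]
    rw [show θ - 2 = θ - 1 - 1 by ring, ← h5]; ring
  rw [← key, hceq, mul_comm, div_mul_cancel₀]
  exact sub_ne_zero_of_ne (ne_of_gt hxy)

private lemma chain_up (x : ℕ → ℝ) (ε : ℝ) (hε : 0 ≤ ε) :
    ∀ m, (∀ k < m, |x (k+1) - x k| ≤ ε) → ∀ y, x 0 ≤ y → y ≤ x m →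
      ∃ k ≤ m, |x k - y| ≤ ε := by
  intro m
  induction m with
  | zero =>
    intro _ y h1 h2
    exact ⟨0, le_refl 0, by rw [abs_le]; constructor <;> linarith⟩
  | succ m ih =>
    intro hstep y h1 h2
    by_cases hy : y ≤ x m
    · obtain ⟨k, hk, hk2⟩ := ih (fun k hk => hstep k (by omega)) y h1 hy
      exact ⟨k, by omega, hk2⟩
    · push_neg at hy
      refine ⟨m+1, le_refl _, ?_⟩
      have := hstep m (by omega)
      rw [abs_le] at this ⊢
      constructor <;> linarith [this.1, this.2]

private lemma straddle (x : ℕ → ℝ) : ∀ N, 0 < N → ∀ y, x 0 ≤ y → y ≤ x N →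
    ∃ i < N, x i ≤ y ∧ y ≤ x (i+1) := by
  intro N
  induction N with
  | zero => omega
  | succ N ih =>
    intro _ y h1 h2
    rcases Nat.eq_zero_or_pos N with h | h
    · subst h; exact ⟨0, by omega, h1, h2⟩
    by_cases hy : y ≤ x N
    · obtain ⟨i, hi, h3⟩ := ih h y h1 hy
      exact ⟨i, by omega, h3⟩
    · push_neg at hy
      exact ⟨N, by omega, le_of_lt hy, h2⟩

private lemma cover (G : ℕ → ℕ → ℝ) (N m : ℕ) (ε : ℝ) (hε : 0 ≤ ε) (hN : 0 < N)
    (hblock : ∀ i ≤ N, ∀ k < m, |G i (k+1) - G i k| ≤ ε)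
    (hspan : ∀ i < N, G (i+1) 0 ≤ G i m)
    (y : ℝ) (h0 : G 0 0 ≤ y) (h1 : y ≤ G N 0) :
    ∃ i ≤ N, ∃ k ≤ m, |G i k - y| ≤ ε := by
  obtain ⟨i, hiN, hy1, hy2⟩ := straddle (fun i => G i 0) N hN y h0 h1
  obtain ⟨k, hk, hk2⟩ := chain_up (G i) ε hε m (hblock i (le_of_lt hiN)) y hy1
    (le_trans hy2 (hspan i hiN))
  exact ⟨i, le_of_lt hiN, k, hk, hk2⟩

theorem stmt_3 (θ : ℝ) (hθ : θ ∈ Set.Ioo (0 : ℝ) 1 ∪ Set.Ioo (1 : ℝ) (3/2)) :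
    ∃ C : ℝ, 0 < C ∧ ∀ (α : ℝ) (n : ℕ), 0 < n →
      ∃ u v : ℕ, 1 ≤ u ∧ u ≤ n ∧ 1 ≤ v ∧ v ≤ n ∧
        distNearestInt ((u : ℝ) ^ θ + (v : ℝ) ^ θ - α) ≤ C * (n : ℝ) ^ (θ - 3/2) := by
  have hθ0 : 0 < θ := by rcases hθ with h | h; exacts [h.1, lt_trans one_pos h.1]
  have hθ32 : θ < 3/2 := by
    rcases hθ with h | h
    · linarith [h.2]
    · exact h.2
  have hcase : θ < 1 ∨ 1 < θ := by rcases hθ with h | h; exacts [Or.inl h.2, Or.inr h.1]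
  set ψ : ℝ := |θ - 1| with hψdef
  have hψ0 : 0 < ψ := abs_pos.mpr (by rcases hcase with h | h <;> intro hc <;> nlinarith)
  have hsψ : 0 < Real.sqrt ψ := Real.sqrt_pos.mpr hψ0
  set C₁ : ℝ := 128 * θ * ψ * (12 / Real.sqrt ψ + 1) with hC₁def
  have hC₁ : 0 < C₁ := by positivity
  set N₁ : ℕ := ⌈(96 / Real.sqrt ψ + 16 : ℝ) ^ 2⌉₊ with hN₁def
  set N₂ : ℕ := ⌈(8 / θ : ℝ) ^ (θ⁻¹)⌉₊ with hN₂def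
  set N₀ : ℕ := max (max N₁ N₂) 16 with hN₀def
  set C : ℝ := C₁ + (1/2) * ((N₀:ℝ) + 1) ^ ((3:ℝ)/2 - θ) + 1 with hCdef
  have hC0 : 0 < C := by positivity
  refine ⟨C, hC0, ?_⟩
  intro α n hn
  have hnpos : (0:ℝ) < n := by exact_mod_cast hn
  by_cases hsmall : n < N₀
  · refine ⟨1, 1, le_refl 1, hn, le_refl 1, hn, ?_⟩
    have h1 : distNearestInt (((1:ℕ):ℝ)^θ + ((1:ℕ):ℝ)^θ - α) ≤ 1/2 := abs_sub_round _
    have hle : (n:ℝ) ≤ (N₀:ℝ) + 1 := by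
      have : (n:ℝ) ≤ (N₀:ℝ) := by exact_mod_cast le_of_lt hsmall
      linarith
    have hx : ((N₀:ℝ)+1) ^ (θ - 3/2) ≤ (n:ℝ) ^ (θ - 3/2) :=
      Real.rpow_le_rpow_of_nonpos hnpos hle (by linarith)
    have hone : ((N₀:ℝ)+1) ^ ((3:ℝ)/2 - θ) * ((N₀:ℝ)+1) ^ (θ - 3/2) = 1 := by
      rw [← Real.rpow_add (by positivity)]
      norm_num
    have hC₁' : (1/2) * (((N₀:ℝ)+1) ^ ((3:ℝ)/2 - θ)) ≤ C := by
      have : (0:ℝ) ≤ ((N₀:ℝ)+1) ^ ((3:ℝ)/2 - θ) := by positivity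
      rw [hCdef]; nlinarith [hC₁]
    calc distNearestInt (((1:ℕ):ℝ)^θ + ((1:ℕ):ℝ)^θ - α) ≤ 1/2 := h1
      _ = (1/2) * (((N₀:ℝ)+1)^((3:ℝ)/2-θ) * ((N₀:ℝ)+1)^(θ-3/2)) := by rw [hone]; ring
      _ ≤ (1/2) * (((N₀:ℝ)+1)^((3:ℝ)/2-θ)) * ((n:ℝ) ^ (θ-3/2)) := by
          rw [mul_assoc]
          have h2 : (0:ℝ) ≤ ((N₀:ℝ)+1)^((3:ℝ)/2-θ) := by positivity
          nlinarith [hx, h2, Real.rpow_nonneg (le_of_lt hnpos) (θ-3/2)]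
      _ ≤ C * (n:ℝ) ^ (θ-3/2) := mul_le_mul_of_nonneg_right hC₁' (by positivity)
  -- main case : n large
  · push_neg at hsmall
    set nR : ℝ := (n:ℝ) with hnRdef
    have hnRpos : (0:ℝ) < nR := hnpos
    have hcastle : ∀ k : ℕ, k ≤ n → (k:ℝ) ≤ nR := by
      intro k hk; rw [hnRdef]; exact_mod_cast hk
    have hn16 : (16:ℝ) ≤ nR := by
      have h16 : (16:ℕ) ≤ n := le_trans (le_max_right _ _) hsmall
      have := hcastle 16 h16
      norm_num at this
      exact this
    have hsqn1 : (1:ℝ) ≤ Real.sqrt nR := by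
      rw [show (1:ℝ) = Real.sqrt 1 by simp]
      exact Real.sqrt_le_sqrt (by linarith)
    set m : ℕ := ⌈Real.sqrt (144 * nR / ψ)⌉₊ with hmdef
    have harg0 : (0:ℝ) ≤ 144 * nR / ψ := by positivity
    have hm_lo : 144 * nR / ψ ≤ (m:ℝ)^2 := by
      have h : Real.sqrt (144 * nR / ψ) ≤ (m:ℝ) := by rw [hmdef]; exact Nat.le_ceil _
      calc 144 * nR / ψ = (Real.sqrt (144 * nR / ψ))^2 := (Real.sq_sqrt harg0).symm
        _ ≤ (m:ℝ)^2 := pow_le_pow_left₀ (Real.sqrt_nonneg _) h 2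
    have hsqrt_eq : Real.sqrt (144 * nR / ψ) = 12 * Real.sqrt nR / Real.sqrt ψ := by
      rw [show 144 * nR / ψ = (12 * Real.sqrt nR / Real.sqrt ψ)^2 by
        rw [div_pow, mul_pow, Real.sq_sqrt (le_of_lt hnRpos), Real.sq_sqrt (le_of_lt hψ0)]
        ring]
      exact Real.sqrt_sq (by positivity)
    have hm_hi : (m:ℝ) ≤ (12 / Real.sqrt ψ + 1) * Real.sqrt nR := by
      have h : (m:ℝ) < 12 * Real.sqrt nR / Real.sqrt ψ + 1 := by
        rw [hmdef, ← hsqrt_eq]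
        exact Nat.ceil_lt_add_one (Real.sqrt_nonneg _)
      have hr : (12 / Real.sqrt ψ + 1) * Real.sqrt nR
          = 12 * Real.sqrt nR / Real.sqrt ψ + Real.sqrt nR := by ring
      linarith only [h, hsqn1, hr]
    have hN₁n : ((96 / Real.sqrt ψ + 16 : ℝ))^2 ≤ nR := by
      have h1 : N₁ ≤ n := le_trans (le_trans (le_max_left _ _) (le_max_left _ _)) hsmall
      calc ((96 / Real.sqrt ψ + 16 : ℝ))^2 ≤ (N₁ : ℝ) := by rw [hN₁def]; exact Nat.le_ceil _
        _ ≤ nR := hcastle N₁ h1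
    have hq : 96 / Real.sqrt ψ + 16 ≤ Real.sqrt nR := by
      have h0 : (0:ℝ) ≤ 96 / Real.sqrt ψ + 16 := by positivity
      calc 96 / Real.sqrt ψ + 16 = Real.sqrt ((96 / Real.sqrt ψ + 16)^2) := (Real.sqrt_sq h0).symm
        _ ≤ Real.sqrt nR := Real.sqrt_le_sqrt hN₁n
    have hF1 : 8 * ((m:ℝ) + 1) ≤ nR := by
      have hss : Real.sqrt nR * Real.sqrt nR = nR := Real.mul_self_sqrt (le_of_lt hnRpos)
      have h1 : 8*((m:ℝ)+1) ≤ (96 / Real.sqrt ψ + 8) * Real.sqrt nR + 8 := by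
        have hr : 8 * ((12 / Real.sqrt ψ + 1) * Real.sqrt nR)
            = (96 / Real.sqrt ψ + 8) * Real.sqrt nR := by ring
        linarith only [hm_hi, hr]
      have h2 : (96 / Real.sqrt ψ + 8) * Real.sqrt nR + 8 ≤ (96 / Real.sqrt ψ + 16) * Real.sqrt nR := by
        have hr2 : (96 / Real.sqrt ψ + 16) * Real.sqrt nR
            = (96 / Real.sqrt ψ + 8) * Real.sqrt nR + 8 * Real.sqrt nR := by ring
        linarith only [hsqn1, hr2]
      have h3 : (96 / Real.sqrt ψ + 16) * Real.sqrt nR ≤ nR := by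
        have := mul_le_mul_of_nonneg_right hq (Real.sqrt_nonneg nR)
        linarith only [this, hss]
      linarith only [h1, h2, h3]
    have hF2 : (8:ℝ) ≤ θ * nR ^ θ := by
      have h1 : N₂ ≤ n := le_trans (le_trans (le_max_right _ _) (le_max_left _ _)) hsmall
      have h2 : ((8/θ:ℝ) ^ (θ⁻¹)) ≤ nR := by
        calc ((8/θ:ℝ) ^ (θ⁻¹)) ≤ (N₂:ℝ) := by rw [hN₂def]; exact Nat.le_ceil _
          _ ≤ nR := hcastle N₂ h1
      have h3 := Real.rpow_le_rpow (Real.rpow_nonneg (by positivity) _) h2 (le_of_lt hθ0)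
      rw [Real.rpow_inv_rpow (by positivity : (0:ℝ) ≤ 8/θ) (ne_of_gt hθ0)] at h3
      have h4 := mul_le_mul_of_nonneg_left h3 (le_of_lt hθ0)
      calc (8:ℝ) = θ*(8/θ) := by field_simp
        _ ≤ θ * nR^θ := h4
    have hF1n : 8 * (m + 1) ≤ n := by
      have h : ((8*(m+1):ℕ):ℝ) ≤ (n:ℝ) := by push_cast; rw [← hnRdef]; linarith only [hF1]
      exact_mod_cast h
    have hn16n : 16 ≤ n := by
      have h16 : (16:ℕ) ≤ N₀ := le_max_right _ _
      omega
    set A : ℕ := n / 4 + 1 with hAdef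
    set B : ℕ := n - m with hBdef
    have hmA : m + 1 ≤ A := by omega
    have hABn : A + 1 ≤ B := by omega
    have hBmn : B + m = n := by omega
    have hA_lo : nR / 4 < (A:ℝ) := by
      have h : n < 4 * A := by omega
      have h' : (n:ℝ) < 4*(A:ℝ) := by exact_mod_cast h
      rw [hnRdef]
      linarith only [h']
    have hA_hi : (A:ℝ) ≤ nR / 4 + 1 := by
      have h : 4 * A ≤ n + 4 := by omega
      have h' : 4*(A:ℝ) ≤ (n:ℝ) + 4 := by exact_mod_cast h
      rw [hnRdef]
      linarith only [h']
    have hB_eq : (B:ℝ) = nR - m := by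
      rw [hBdef, Nat.cast_sub (by omega : m ≤ n), hnRdef]
    have hm18 : (m:ℝ) + 1 ≤ nR / 8 := by linarith only [hF1]
    -- the two-parameter family
    set T : ℕ → ℕ → ℝ := fun b k => ((b + k : ℕ):ℝ)^θ + ((b - k : ℕ):ℝ)^θ with hTdef
    have hT0 : ∀ b : ℕ, T b 0 = 2 * ((b:ℕ):ℝ)^θ := by
      intro b; simp only [hTdef, Nat.add_zero, Nat.sub_zero]; ring
    -- the step identity
    have hstep : ∀ b : ℕ, A ≤ b → b ≤ B → ∀ k : ℕ, k < m →
        ∃ d : ℝ, nR/8 ≤ d ∧ d ≤ nR + 2 ∧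
          T b (k+1) - T b k = (2*(k:ℝ)+1) * (θ * ((θ-1) * d ^ (θ-2))) := by
      intro b hbA hbB k hkm
      have hkb : k + 1 ≤ b := le_trans (le_trans (by omega) hmA) hbA
      have hbR : nR/4 < (b:ℝ) := lt_of_lt_of_le hA_lo (Nat.cast_le.mpr hbA)
      have hbBR : (b:ℝ) ≤ nR - m := by rw [← hB_eq]; exact_mod_cast hbB
      have hk0 : (0:ℝ) ≤ (k:ℝ) := Nat.cast_nonneg k
      have hkR : (k:ℝ) + 1 ≤ (m:ℝ) := by exact_mod_cast hkm
      set x : ℝ := (b:ℝ) - k - 1 with hxdef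
      have hx8 : nR/8 ≤ x := by rw [hxdef]; linarith only [hm18, hbR, hkR]
      have hx0 : 0 < x := lt_of_lt_of_le (by linarith only [hnRpos]) hx8
      have hxy : x < (b:ℝ) + k := by
        rw [hxdef]
        linarith only [hk0]
      obtain ⟨d, hd, heq⟩ := mvt_second θ hx0 hxy
      refine ⟨d, le_trans hx8 (le_of_lt hd.1), ?_, ?_⟩
      · have h2 : d < (b:ℝ) + k + 1 := hd.2
        linarith only [h2, hbBR, hkR]
      · have hc1 : ((b + (k+1) : ℕ):ℝ) = ((b:ℝ) + k) + 1 := by push_cast; ring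
        have hc2 : ((b - (k+1) : ℕ):ℝ) = x := by
          rw [hxdef, Nat.cast_sub hkb]; push_cast; ring
        have hc3 : ((b + k : ℕ):ℝ) = (b:ℝ) + k := by push_cast; ring
        have hc4 : ((b - k : ℕ):ℝ) = x + 1 := by
          rw [hxdef, Nat.cast_sub (by omega : k ≤ b)]; push_cast; ring
        have hyx : (b:ℝ) + k - x = 2*(k:ℝ)+1 := by rw [hxdef]; ring
        simp only [hTdef]
        rw [hc1, hc2, hc3, hc4, ← hyx]
        linear_combination heq
    -- step size bound
    set ε : ℝ := C₁ * nR ^ (θ - 3/2) with hεdef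
    have hε0 : 0 ≤ ε := by positivity
    have hkey8 : (nR/8) ^ (θ-2) ≤ 64 * nR^(θ-2) := by
      have h1 : (nR/8 : ℝ) ^ (θ-2) = nR^(θ-2) / 8^(θ-2) :=
        Real.div_rpow (le_of_lt hnRpos) (by norm_num) _
      have h2 : (8:ℝ)^(θ-2) = ((8:ℝ)^(2-θ))⁻¹ := by
        rw [show θ-2 = -(2-θ) by ring, Real.rpow_neg (by norm_num : (0:ℝ) ≤ 8)]
      have h3 : (8:ℝ)^(2-θ) ≤ 64 := by
        calc (8:ℝ)^(2-θ) ≤ (8:ℝ)^(2:ℝ) :=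
              Real.rpow_le_rpow_of_exponent_le (by norm_num) (by linarith)
          _ = 64 := by
              rw [show (2:ℝ) = ((2:ℕ):ℝ) by norm_num, Real.rpow_natCast]; norm_num
      have h4 : (0:ℝ) < (8:ℝ)^(2-θ) := by positivity
      have h5 : (0:ℝ) < nR^(θ-2) := by positivity
      rw [h1, h2, div_eq_mul_inv, inv_inv]
      have := mul_le_mul_of_nonneg_left h3 (le_of_lt h5)
      linarith only [this]
    have hsplit : nR^(θ-3/2) = Real.sqrt nR * nR^(θ-2) := by
      rw [show θ - 3/2 = 1/2 + (θ-2) by ring, Real.rpow_add hnRpos, ← Real.sqrt_eq_rpow]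
    have hstep_abs : ∀ b, A ≤ b → b ≤ B → ∀ k, k < m → |T b (k+1) - T b k| ≤ ε := by
      intro b h1 h2 k h3
      obtain ⟨d, hd1, hd2, heq⟩ := hstep b h1 h2 k h3
      have hd0 : 0 < d := lt_of_lt_of_le (by linarith only [hnRpos]) hd1
      have habs : |T b (k+1) - T b k| = (2*(k:ℝ)+1) * (θ * (ψ * d^(θ-2))) := by
        rw [heq, abs_mul, abs_mul, abs_mul,
          abs_of_nonneg (by positivity : (0:ℝ) ≤ 2*(k:ℝ)+1),
          abs_of_nonneg (le_of_lt hθ0),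
          abs_of_nonneg (by positivity : (0:ℝ) ≤ d^(θ-2))]
      have hdp : d^(θ-2) ≤ (nR/8)^(θ-2) :=
        Real.rpow_le_rpow_of_nonpos (by linarith) hd1 (by linarith)
      have hkm' : 2*(k:ℝ)+1 ≤ 2*(m:ℝ) := by
        have : (k:ℝ) + 1 ≤ (m:ℝ) := by exact_mod_cast h3
        linarith only [this]
      have hdp64 : d^(θ-2) ≤ 64 * nR^(θ-2) := le_trans hdp hkey8
      have hm0 : (0:ℝ) ≤ (m:ℝ) := Nat.cast_nonneg m
      calc |T b (k+1) - T b k| = (2*(k:ℝ)+1) * (θ * (ψ * d^(θ-2))) := habs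
        _ ≤ (2*(m:ℝ)) * (θ * (ψ * (64 * nR^(θ-2)))) := by
            have hθψ : (0:ℝ) ≤ θ * (ψ * d^(θ-2)) := by positivity
            have e1 : θ * (ψ * d^(θ-2)) ≤ θ * (ψ * (64 * nR^(θ-2))) := by
              have := mul_le_mul_of_nonneg_left hdp64 (le_of_lt hψ0)
              exact mul_le_mul_of_nonneg_left this (le_of_lt hθ0)
            have e2 : (0:ℝ) ≤ 2*(m:ℝ) := by linarith only [hm0]
            calc (2*(k:ℝ)+1) * (θ * (ψ * d^(θ-2)))
                ≤ (2*(m:ℝ)) * (θ * (ψ * d^(θ-2))) := mul_le_mul_of_nonneg_right hkm' hθψ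
              _ ≤ (2*(m:ℝ)) * (θ * (ψ * (64 * nR^(θ-2)))) := mul_le_mul_of_nonneg_left e1 e2
        _ ≤ (2*((12 / Real.sqrt ψ + 1) * Real.sqrt nR)) * (θ * (ψ * (64 * nR^(θ-2)))) := by
            have hpos : (0:ℝ) ≤ θ * (ψ * (64 * nR^(θ-2))) := by positivity
            have h2m : 2*(m:ℝ) ≤ 2*((12 / Real.sqrt ψ + 1) * Real.sqrt nR) := by
              linarith only [hm_hi]
            exact mul_le_mul_of_nonneg_right h2m hpos
        _ = C₁ * (Real.sqrt nR * nR^(θ-2)) := by rw [hC₁def]; ring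
        _ = ε := by rw [hεdef, hsplit]
    -- sum of odd numbers
    have hsum_odd : ∀ M:ℕ, ∑ k ∈ Finset.range M, (2*(k:ℝ)+1) = (M:ℝ)^2 := by
      intro M
      induction M with
      | zero => simp
      | succ M ih => rw [Finset.sum_range_succ, ih]; push_cast; ring
    -- span bounds
    set S : ℝ := 144 * θ * nR * (nR+2)^(θ-2) with hSdef
    have hX0 : (0:ℝ) < (nR+2)^(θ-2) := by positivity
    have hspan_key : ∀ b, A ≤ b → b ≤ B →
        ((1 < θ → S ≤ T b m - T b 0) ∧ (θ < 1 → S ≤ T b 0 - T b m)) := by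
      intro b hbA hbB
      have htel : ∑ k ∈ Finset.range m, (T b (k+1) - T b k) = T b m - T b 0 :=
        Finset.sum_range_sub (fun k => T b k) m
      have hterm : ∀ k ∈ Finset.range m, ∃ d : ℝ, nR/8 ≤ d ∧ d ≤ nR + 2 ∧
          T b (k+1) - T b k = (2*(k:ℝ)+1) * (θ * ((θ-1) * d ^ (θ-2))) :=
        fun k hk => hstep b hbA hbB k (Finset.mem_range.mp hk)
      have hmsq : 144 * nR / ψ * (θ * (ψ * (nR+2)^(θ-2))) ≤
          (m:ℝ)^2 * (θ * (ψ * (nR+2)^(θ-2))) := by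
        apply mul_le_mul_of_nonneg_right hm_lo
        positivity
      have hmagic : 144 * nR / ψ * (θ * (ψ * (nR+2)^(θ-2))) = S := by
        rw [hSdef]; field_simp
      constructor
      · intro hθ1
        have hψeq : ψ = θ - 1 := abs_of_pos (by linarith)
        have hlow : ∀ k ∈ Finset.range m,
            (2*(k:ℝ)+1) * (θ * ((θ-1) * (nR+2)^(θ-2))) ≤ T b (k+1) - T b k := by
          intro k hk
          obtain ⟨d, hd1, hd2, heq⟩ := hterm k hk
          have hd0 : (0:ℝ) < d := lt_of_lt_of_le (by linarith only [hnRpos]) hd1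
          have hdp : (nR+2)^(θ-2) ≤ d^(θ-2) :=
            Real.rpow_le_rpow_of_nonpos hd0 hd2 (by linarith only [hθ32])
          rw [heq]
          have h1 : (θ-1) * (nR+2)^(θ-2) ≤ (θ-1) * d^(θ-2) :=
            mul_le_mul_of_nonneg_left hdp (by linarith only [hθ1])
          have h2 : θ * ((θ-1) * (nR+2)^(θ-2)) ≤ θ * ((θ-1) * d^(θ-2)) :=
            mul_le_mul_of_nonneg_left h1 (le_of_lt hθ0)
          exact mul_le_mul_of_nonneg_left h2 (by positivity)
        have hsum := Finset.sum_le_sum hlow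
        rw [htel] at hsum
        rw [← Finset.sum_mul, hsum_odd m] at hsum
        calc S = 144 * nR / ψ * (θ * (ψ * (nR+2)^(θ-2))) := hmagic.symm
          _ ≤ (m:ℝ)^2 * (θ * (ψ * (nR+2)^(θ-2))) := hmsq
          _ = (m:ℝ)^2 * (θ * ((θ-1) * (nR+2)^(θ-2))) := by rw [hψeq]
          _ ≤ T b m - T b 0 := hsum
      · intro hθ1
        have hψeq : ψ = 1 - θ := by rw [hψdef, abs_of_neg (by linarith : θ - 1 < 0)]; ring
        have hhigh : ∀ k ∈ Finset.range m,
            T b (k+1) - T b k ≤ (2*(k:ℝ)+1) * (θ * ((θ-1) * (nR+2)^(θ-2))) := by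
          intro k hk
          obtain ⟨d, hd1, hd2, heq⟩ := hterm k hk
          have hd0 : (0:ℝ) < d := lt_of_lt_of_le (by linarith only [hnRpos]) hd1
          have hdp : (nR+2)^(θ-2) ≤ d^(θ-2) :=
            Real.rpow_le_rpow_of_nonpos hd0 hd2 (by linarith only [hθ32])
          rw [heq]
          have h1 : (θ-1) * d^(θ-2) ≤ (θ-1) * (nR+2)^(θ-2) :=
            mul_le_mul_of_nonpos_left hdp (by linarith only [hθ1])
          have h2 : θ * ((θ-1) * d^(θ-2)) ≤ θ * ((θ-1) * (nR+2)^(θ-2)) :=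
            mul_le_mul_of_nonneg_left h1 (le_of_lt hθ0)
          exact mul_le_mul_of_nonneg_left h2 (by positivity)
        have hsum := Finset.sum_le_sum hhigh
        rw [htel] at hsum
        rw [← Finset.sum_mul, hsum_odd m] at hsum
        have hneg : (m:ℝ)^2 * (θ * ((θ-1) * (nR+2)^(θ-2))) ≤ -S := by
          have e1 : (m:ℝ)^2 * (θ * ((θ-1) * (nR+2)^(θ-2)))
              = -((m:ℝ)^2 * (θ * (ψ * (nR+2)^(θ-2)))) := by rw [hψeq]; ring
          rw [e1]
          linarith only [hmsq, hmagic]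
        linarith only [hsum, hneg]
    -- base step bounds
    have hdelta : ∀ b:ℕ, A ≤ b → (b:ℝ) ≤ nR →
        ((1 < θ → T (b+1) 0 - T b 0 ≤ 2*θ*((nR+2)*(nR+2)^(θ-2))) ∧
         (θ < 1 → T (b+1) 0 - T b 0 ≤ 8*θ*nR^(θ-1))) := by
      intro b hbA hbn
      have hbR : nR/4 < (b:ℝ) := lt_of_lt_of_le hA_lo (Nat.cast_le.mpr hbA)
      have hb0 : (0:ℝ) < b := by linarith only [hbR, hnRpos]
      obtain ⟨c, hc, hceq⟩ := mvt_rpow θ hb0 (by linarith only [] : (b:ℝ) < (b:ℝ) + 1)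
      have hc0 : (0:ℝ) < c := lt_trans hb0 hc.1
      have hTT : T (b+1) 0 - T b 0 = 2 * (θ * c^(θ-1)) := by
        rw [hT0, hT0]
        have hcast : ((b+1:ℕ):ℝ) = (b:ℝ)+1 := by push_cast; ring
        rw [hcast]
        linear_combination 2 * hceq
      constructor
      · intro h1
        have hcle : c ≤ nR + 2 := by
          have := hc.2
          linarith only [this, hbn]
        have h2 : c^(θ-1) ≤ (nR+2)^(θ-1) :=
          Real.rpow_le_rpow (le_of_lt hc0) hcle (by linarith only [h1])
        have h3 : (nR+2)^(θ-1) = (nR+2)*(nR+2)^(θ-2) := by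
          rw [show θ-1 = 1 + (θ-2) by ring, Real.rpow_add (by linarith), Real.rpow_one]
        rw [hTT]
        rw [h3] at h2
        have := mul_le_mul_of_nonneg_left h2 (le_of_lt hθ0)
        linarith only [this]
      · intro h1
        have hc4 : nR/4 ≤ c := by linarith only [hc.1, hbR]
        have h2 : c^(θ-1) ≤ (nR/4)^(θ-1) :=
          Real.rpow_le_rpow_of_nonpos (by linarith only [hnRpos]) hc4 (by linarith only [h1])
        have h3 : (nR/4)^(θ-1) ≤ 4 * nR^(θ-1) := by
          have e1 : (nR/4 : ℝ) ^ (θ-1) = nR^(θ-1) / 4^(θ-1) :=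
            Real.div_rpow (le_of_lt hnRpos) (by norm_num) _
          have e2 : (4:ℝ)^(θ-1) = ((4:ℝ)^(1-θ))⁻¹ := by
            rw [show θ-1 = -(1-θ) by ring, Real.rpow_neg (by norm_num : (0:ℝ) ≤ 4)]
          have e3 : (4:ℝ)^(1-θ) ≤ 4 := by
            calc (4:ℝ)^(1-θ) ≤ (4:ℝ)^(1:ℝ) :=
                  Real.rpow_le_rpow_of_exponent_le (by norm_num) (by linarith only [hθ0])
              _ = 4 := Real.rpow_one 4
          have e4 : (0:ℝ) < (4:ℝ)^(1-θ) := by positivity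
          have e5 : (0:ℝ) < nR^(θ-1) := by positivity
          rw [e1, e2, div_eq_mul_inv, inv_inv]
          have := mul_le_mul_of_nonneg_left e3 (le_of_lt e5)
          linarith only [this]
        rw [hTT]
        have h4 : c^(θ-1) ≤ 4 * nR^(θ-1) := le_trans h2 h3
        have := mul_le_mul_of_nonneg_left h4 (le_of_lt hθ0)
        linarith only [this]
    -- coverage
    have hA0 : (0:ℝ) < (A:ℝ) := by linarith only [hA_lo, hnRpos]
    have hBn : (B:ℝ) ≤ nR := by rw [hB_eq]; linarith only [(Nat.cast_nonneg m : (0:ℝ) ≤ (m:ℝ))]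
    have hcov : 2*((A:ℕ):ℝ)^θ + 1 ≤ 2*((B:ℕ):ℝ)^θ := by
      have hABR : (A:ℝ) < (B:ℝ) := by exact_mod_cast (by omega : A < B)
      obtain ⟨c, hc, hceq⟩ := mvt_rpow θ hA0 hABR
      have hc0 : (0:ℝ) < c := lt_trans hA0 hc.1
      have hBA : nR/2 ≤ (B:ℝ) - A := by
        rw [hB_eq]
        linarith only [hA_hi, hm18]
      have hc8 : nR^(θ-1)/8 ≤ c^(θ-1) := by
        rcases hcase with h1 | h1
        · have hcn : c ≤ nR := by linarith only [hc.2, hBn]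
          have h2 : nR^(θ-1) ≤ c^(θ-1) :=
            Real.rpow_le_rpow_of_nonpos hc0 hcn (by linarith only [h1])
          have h5 : (0:ℝ) < nR^(θ-1) := by positivity
          linarith only [h2, h5]
        · have hc8' : nR/8 ≤ c := by linarith only [hc.1, hA_lo, hnRpos]
          have h2 : (nR/8)^(θ-1) ≤ c^(θ-1) :=
            Real.rpow_le_rpow (by linarith only [hnRpos]) hc8' (by linarith only [h1])
          have e1 : (nR/8 : ℝ) ^ (θ-1) = nR^(θ-1) / 8^(θ-1) :=
            Real.div_rpow (le_of_lt hnRpos) (by norm_num) _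
          have e3 : (8:ℝ)^(θ-1) ≤ 8 := by
            calc (8:ℝ)^(θ-1) ≤ (8:ℝ)^(1:ℝ) :=
                  Real.rpow_le_rpow_of_exponent_le (by norm_num) (by linarith only [hθ32])
              _ = 8 := Real.rpow_one 8
          have e4 : (0:ℝ) < (8:ℝ)^(θ-1) := by positivity
          have e5 : (0:ℝ) < nR^(θ-1) := by positivity
          have e6 : nR^(θ-1)/8 ≤ nR^(θ-1)/(8:ℝ)^(θ-1) := by
            rw [div_le_div_iff₀ (by norm_num) e4]
            have := mul_le_mul_of_nonneg_left e3 (le_of_lt e5)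
            linarith only [this]
          rw [e1] at h2
          linarith only [h2, e6]
      have hmul : nR * nR^(θ-1) = nR^θ := by
        rw [show θ = 1 + (θ-1) by ring, Real.rpow_add hnRpos, Real.rpow_one]
        norm_num
      have t2 : (nR/2) * (θ * (nR^(θ-1)/8)) ≤ ((B:ℝ)-A) * (θ * c^(θ-1)) := by
        apply mul_le_mul hBA (mul_le_mul_of_nonneg_left hc8 (le_of_lt hθ0)) (by positivity)
        linarith only [hBA, hnRpos]
      have t3 : (nR/2) * (θ * (nR^(θ-1)/8)) = θ * nR^θ/16 := by rw [← hmul]; ring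
      linarith only [hceq, t2, t3, hF2]
    -- comparisons between S and base steps
    have hS8 : 8*θ*nR^(θ-1) ≤ S := by
      have h1 : (3*nR)^(θ-2) ≤ (nR+2)^(θ-2) :=
        Real.rpow_le_rpow_of_nonpos (by linarith only [hnRpos]) (by linarith only [hn16])
          (by linarith only [hθ32])
      have h2 : (3*nR)^(θ-2) = 3^(θ-2) * nR^(θ-2) :=
        Real.mul_rpow (by norm_num) (le_of_lt hnRpos)
      have h3 : (1:ℝ)/9 ≤ (3:ℝ)^(θ-2) := by
        have h3a : (3:ℝ)^(-2:ℝ) ≤ (3:ℝ)^(θ-2) :=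
          Real.rpow_le_rpow_of_exponent_le (by norm_num) (by linarith only [hθ0])
        have e : (3:ℝ)^(-2:ℝ) = 1/9 := by
          rw [show (-2:ℝ) = -((2:ℕ):ℝ) by norm_num, Real.rpow_neg (by norm_num), Real.rpow_natCast]
          norm_num
        rw [← e]
        exact h3a
      have h4 : nR * nR^(θ-2) = nR^(θ-1) := by
        rw [show θ-1 = 1+(θ-2) by ring, Real.rpow_add hnRpos, Real.rpow_one]
      have h5 : (0:ℝ) ≤ nR^(θ-2) := by positivity
      have e7 := mul_le_mul_of_nonneg_right h3 h5
      have e8 : (1/9:ℝ)*nR^(θ-2) ≤ (3*nR)^(θ-2) := by rw [h2]; exact e7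
      have h6 : 144*θ*nR*((1/9) * nR^(θ-2)) ≤ 144*θ*nR*((nR+2)^(θ-2)) := by
        have e9 : (1/9:ℝ)*nR^(θ-2) ≤ (nR+2)^(θ-2) := le_trans e8 h1
        exact mul_le_mul_of_nonneg_left e9 (by positivity)
      calc 8*θ*nR^(θ-1) ≤ 16*θ*nR^(θ-1) := by
            have := mul_nonneg (le_of_lt hθ0) (Real.rpow_nonneg (le_of_lt hnRpos) (θ-1))
            linarith only [this]
        _ = 144*θ*nR*((1/9)*nR^(θ-2)) := by rw [← h4]; ring
        _ ≤ 144*θ*nR*((nR+2)^(θ-2)) := h6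
        _ = S := by rw [hSdef]
    have hS2 : 2*θ*((nR+2)*(nR+2)^(θ-2)) ≤ S := by
      have h244 : 2*(nR+2) ≤ 144*nR := by linarith only [hn16]
      calc 2*θ*((nR+2)*(nR+2)^(θ-2)) = (2*(nR+2))*(θ*(nR+2)^(θ-2)) := by ring
        _ ≤ (144*nR)*(θ*(nR+2)^(θ-2)) := mul_le_mul_of_nonneg_right h244 (by positivity)
        _ = S := by rw [hSdef]; ring
    -- target value
    set MM : ℤ := ⌈2*((A:ℕ):ℝ)^θ - α⌉ with hMMdef
    set y : ℝ := α + MM with hydef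
    have hy1 : 2*((A:ℕ):ℝ)^θ ≤ y := by
      rw [hydef, hMMdef]
      linarith only [Int.le_ceil (2*((A:ℕ):ℝ)^θ - α)]
    have hy2 : y < 2*((A:ℕ):ℝ)^θ + 1 := by
      rw [hydef, hMMdef]
      linarith only [Int.ceil_lt_add_one (2*((A:ℕ):ℝ)^θ - α)]
    have hy3 : y ≤ 2*((B:ℕ):ℝ)^θ := by linarith only [hcov, hy2]
    set NN : ℕ := B - A with hNNdef
    have hNN0 : 0 < NN := by omega
    have hεC : ε ≤ C * nR ^ (θ-3/2) := by
      rw [hεdef]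
      apply mul_le_mul_of_nonneg_right ?_ (by positivity)
      rw [hCdef]
      have : (0:ℝ) ≤ (1/2) * ((N₀:ℝ) + 1) ^ ((3:ℝ)/2 - θ) := by positivity
      linarith only [this]
    rcases hcase with hθlt | hθgt
    -- case θ < 1 : use G i k = - T (B - i) k
    · have hblock : ∀ i ≤ NN, ∀ k < m,
          |(fun i k => - T (B - i) k) i (k+1) - (fun i k => - T (B - i) k) i k| ≤ ε := by
        intro i hi k hk
        have hbA : A ≤ B - i := by omega
        have hbB : B - i ≤ B := by omega
        have h := hstep_abs (B - i) hbA hbB k hk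
        simp only []
        rw [show (-T (B-i) (k+1)) - (-T (B-i) k) = -(T (B-i) (k+1) - T (B-i) k) by ring, abs_neg]
        exact h
      have hspan' : ∀ i < NN,
          (fun i k => - T (B - i) k) (i+1) 0 ≤ (fun i k => - T (B - i) k) i m := by
        intro i hi
        simp only []
        have hbA1 : A + 1 ≤ B - i := by omega
        have hbB : B - i ≤ B := by omega
        have hb1 : B - (i+1) = (B - i) - 1 := by omega
        have hsk := (hspan_key (B-i) (by omega) hbB).2 hθlt
        have hble : (((B-i) - 1 : ℕ):ℝ) ≤ nR := hcastle _ (by omega)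
        have hd := (hdelta ((B-i)-1) (by omega) hble).2 hθlt
        have hb1' : (B-i) - 1 + 1 = B - i := by omega
        rw [hb1'] at hd
        rw [hb1]
        linarith only [hsk, hd, hS8]
      have h0' : (fun i k => - T (B - i) k) 0 0 ≤ -y := by
        simp only [Nat.sub_zero]
        rw [hT0 B]
        linarith only [hy3]
      have h1' : -y ≤ (fun i k => - T (B - i) k) NN 0 := by
        simp only []
        have hBNN : B - NN = A := by omega
        rw [hBNN, hT0 A]
        linarith only [hy1]
      obtain ⟨i, hi, k, hk, hfin⟩ :=
        cover (fun i k => - T (B - i) k) NN m ε hε0 hNN0 hblock hspan' (-y) h0' h1'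
      have hbA : A ≤ B - i := by omega
      have hbB : B - i ≤ B := by omega
      refine ⟨(B-i) + k, (B-i) - k, by omega, by omega, by omega, by omega, ?_⟩
      have hfin' : |T (B-i) k - y| ≤ ε := by
        rw [show (-(T (B-i) k)) - (-y) = -(T (B-i) k - y) by ring, abs_neg] at hfin
        exact hfin
      unfold distNearestInt
      calc |(((B-i)+k:ℕ):ℝ)^θ + (((B-i)-k:ℕ):ℝ)^θ - α -
            round ((((B-i)+k:ℕ):ℝ)^θ + (((B-i)-k:ℕ):ℝ)^θ - α)|
          ≤ |(((B-i)+k:ℕ):ℝ)^θ + (((B-i)-k:ℕ):ℝ)^θ - α - MM| := dist_round_le _ MM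
        _ = |T (B-i) k - y| := by rw [hydef]; simp only [hTdef]; ring_nf
        _ ≤ ε := hfin'
        _ ≤ C * nR ^ (θ-3/2) := hεC
    -- case θ > 1 : use G i k = T (A + i) k
    · have hblock : ∀ i ≤ NN, ∀ k < m,
          |(fun i k => T (A + i) k) i (k+1) - (fun i k => T (A + i) k) i k| ≤ ε := by
        intro i hi k hk
        exact hstep_abs (A+i) (by omega) (by omega) k hk
      have hspan' : ∀ i < NN,
          (fun i k => T (A + i) k) (i+1) 0 ≤ (fun i k => T (A + i) k) i m := by
        intro i hi
        simp only []
        have hsk := (hspan_key (A+i) (by omega) (by omega)).1 hθgt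
        have hble : ((A+i : ℕ):ℝ) ≤ nR := hcastle _ (by omega)
        have hd := (hdelta (A+i) (by omega) hble).1 hθgt
        have hc : A + (i+1) = (A+i) + 1 := by omega
        rw [hc]
        linarith only [hsk, hd, hS2]
      have h0' : (fun i k => T (A + i) k) 0 0 ≤ y := by
        simp only [Nat.add_zero]
        rw [hT0 A]
        linarith only [hy1]
      have h1' : y ≤ (fun i k => T (A + i) k) NN 0 := by
        simp only []
        have hANN : A + NN = B := by omega
        rw [hANN, hT0 B]
        linarith only [hy3]
      obtain ⟨i, hi, k, hk, hfin⟩ :=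
        cover (fun i k => T (A + i) k) NN m ε hε0 hNN0 hblock hspan' y h0' h1'
      have hbB : A + i ≤ B := by omega
      refine ⟨(A+i) + k, (A+i) - k, by omega, by omega, by omega, by omega, ?_⟩
      have hfin' : |T (A+i) k - y| ≤ ε := hfin
      unfold distNearestInt
      calc |((A+i+k:ℕ):ℝ)^θ + ((A+i-k:ℕ):ℝ)^θ - α -
            round (((A+i+k:ℕ):ℝ)^θ + ((A+i-k:ℕ):ℝ)^θ - α)|
          ≤ |((A+i+k:ℕ):ℝ)^θ + ((A+i-k:ℕ):ℝ)^θ - α - MM| := dist_round_le _ MM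
        _ = |T (A+i) k - y| := by rw [hydef]; simp only [hTdef]; ring_nf
        _ ≤ ε := hfin'
        _ ≤ C * nR ^ (θ-3/2) := hεC
end

section
/- Let k be a positive integer and let ρ : ℕ → ℝ be a function with ρ(m) ≥ 0 for all m and Σ_{m=1}^∞ ρ(m)/m < ∞. Then for almost all θ > 0 (with respect to Lebesgue measure), the set of tuples (a_1, …, a_k, b) ∈ ℕ^{k+1} of positive integers satisfying | Σ_{j=1}^k a_j^θ − b | ≤ ρ(max_j a_j) / (max_j a_j)^k is finite. Equivalently, the set of θ > 0 for which infinitely many such tuples exist has Lebesgue measure zero. -/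
open MeasureTheory Filter Set
open scoped ENNReal

namespace Stmt6Aux

lemma volume_le_of_diam_le {s : Set ℝ} {d : ℝ}
    (h : ∀ x ∈ s, ∀ y ∈ s, |x - y| ≤ d) : volume s ≤ ENNReal.ofReal (2 * d) := by
  rcases s.eq_empty_or_nonempty with rfl | ⟨x₀, hx₀⟩
  · simp
  · have hsub : s ⊆ Set.Icc (x₀ - d) (x₀ + d) := by
      intro y hy
      have := abs_le.1 (h x₀ hx₀ y hy)
      constructor <;> [linarith [this.2]; linarith [this.1]]
    calc volume s ≤ volume (Set.Icc (x₀-d) (x₀+d)) := measure_mono hsub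
    _ = ENNReal.ofReal (2*d) := by rw [Real.volume_Icc]; ring_nf

lemma hasDerivAt_fsum (k : ℕ) (a : Fin k → ℕ) (ha : ∀ j, 1 ≤ a j) (θ : ℝ) :
    HasDerivAt (fun θ : ℝ => ∑ j, (a j : ℝ) ^ θ)
      (∑ j, (a j : ℝ) ^ θ * Real.log (a j)) θ := by
  apply HasDerivAt.fun_sum
  intro j _
  have : (0:ℝ) < a j := by exact_mod_cast Nat.lt_of_lt_of_le Nat.zero_lt_one (ha j)
  exact (Real.hasStrictDerivAt_const_rpow this θ).hasDerivAt

lemma key (k : ℕ) (hk : 1 ≤ k) (a : Fin k → ℕ) (ha : ∀ j, 1 ≤ a j)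
    (hm : 2 ≤ Finset.univ.sup a) (b : ℕ) (hb : 1 ≤ b) (ε : ℝ) (hε0 : 0 ≤ ε) (hε : ε ≤ 1/2)
    (A B : ℝ) (hA : 0 < A) :
    volume {θ : ℝ | θ ∈ Set.Icc A B ∧ |(∑ j, (a j : ℝ) ^ θ) - b| ≤ ε} ≤
      ENNReal.ofReal (8 * k * ε / (b * Real.log ((Finset.univ.sup a : ℕ) : ℝ))) := by
  set m := Finset.univ.sup a with hmdef
  set f : ℝ → ℝ := fun θ => ∑ j, (a j : ℝ) ^ θ with hfdef
  have hkpos : (0:ℝ) < k := by exact_mod_cast hk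
  haveI : Nonempty (Fin k) := ⟨⟨0, hk⟩⟩
  obtain ⟨j₀, -, hj₀⟩ := Finset.exists_mem_eq_sup (Finset.univ : Finset (Fin k))
    Finset.univ_nonempty a
  have hm2 : (2:ℝ) ≤ (m:ℝ) := by exact_mod_cast hm
  have hlog2 : (0:ℝ) < Real.log 2 := Real.log_pos one_lt_two
  have hlogm : 0 < Real.log m := lt_of_lt_of_le hlog2 (Real.log_le_log (by norm_num) hm2)
  have hb1 : (1:ℝ) ≤ (b:ℝ) := by exact_mod_cast hb
  have hbε : (b:ℝ)/2 ≤ (b:ℝ) - ε := by linarith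
  have hbε0 : 0 < (b:ℝ) - ε := by linarith
  set c : ℝ := ((b:ℝ) - ε) / k * Real.log m with hcdef
  have hc0 : 0 < c := mul_pos (div_pos hbε0 hkpos) hlogm
  have hdiff : Differentiable ℝ f := fun θ => (hasDerivAt_fsum k a ha θ).differentiableAt
  have hmono : ∀ {x y : ℝ}, x ≤ y → f x ≤ f y := by
    intro x y hxy
    apply Finset.sum_le_sum
    intro j _
    exact Real.rpow_le_rpow_of_exponent_le (by exact_mod_cast ha j) hxy
  -- core distance estimate
  have core : ∀ θ₁ ∈ {θ : ℝ | θ ∈ Set.Icc A B ∧ |f θ - b| ≤ ε},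
      ∀ θ₂ ∈ {θ : ℝ | θ ∈ Set.Icc A B ∧ |f θ - b| ≤ ε}, θ₁ ≤ θ₂ →
        θ₂ - θ₁ ≤ 4 * k * ε / (b * Real.log m) := by
    rintro θ₁ ⟨hθ₁I, hθ₁⟩ θ₂ ⟨hθ₂I, hθ₂⟩ h12
    have hderivbound : ∀ x ∈ interior (Set.Icc θ₁ θ₂), c ≤ deriv f x := by
      intro x hx
      rw [interior_Icc] at hx
      have hx1 : θ₁ ≤ x := le_of_lt hx.1
      have hx0 : 0 ≤ x := le_trans (le_of_lt hA) (le_trans hθ₁I.1 hx1)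
      rw [(hasDerivAt_fsum k a ha x).deriv]
      have h1 : (b:ℝ) - ε ≤ f x := by
        have := abs_le.1 hθ₁
        have : (b:ℝ) - ε ≤ f θ₁ := by linarith [this.1]
        linarith [hmono hx1]
      have h2 : f x ≤ (k:ℝ) * (m:ℝ) ^ x := by
        have : ∀ j : Fin k, (a j : ℝ) ^ x ≤ (m:ℝ) ^ x := by
          intro j
          exact Real.rpow_le_rpow (Nat.cast_nonneg _)
            (by exact_mod_cast Finset.le_sup (Finset.mem_univ j)) hx0
        calc f x ≤ ∑ _j : Fin k, (m:ℝ) ^ x := Finset.sum_le_sum fun j _ => this j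
        _ = (k:ℝ) * (m:ℝ) ^ x := by simp [mul_comm]
      have h3 : ((b:ℝ) - ε) / k ≤ (m:ℝ) ^ x := by
        rw [div_le_iff₀ hkpos] at *
        nlinarith [h1, h2]
      have h4 : (m:ℝ) ^ x * Real.log m ≤ ∑ j, (a j : ℝ) ^ x * Real.log (a j) := by
        have := Finset.single_le_sum (f := fun j => (a j : ℝ) ^ x * Real.log (a j))
          (fun j _ => mul_nonneg (Real.rpow_nonneg (Nat.cast_nonneg _) x)
            (Real.log_nonneg (by exact_mod_cast ha j))) (Finset.mem_univ j₀)
        rw [show ((m:ℕ):ℝ) = ((a j₀ : ℕ) : ℝ) by rw [hmdef, hj₀]]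
        exact this
      calc c ≤ (m:ℝ) ^ x * Real.log m :=
            mul_le_mul_of_nonneg_right h3 (le_of_lt hlogm)
      _ ≤ _ := h4
    have hmvt := (convex_Icc θ₁ θ₂).mul_sub_le_image_sub_of_le_deriv
      hdiff.continuous.continuousOn hdiff.differentiableOn hderivbound
      θ₁ (Set.left_mem_Icc.2 h12) θ₂ (Set.right_mem_Icc.2 h12) h12
    have hub : f θ₂ - f θ₁ ≤ 2 * ε := by
      have h1 := abs_le.1 hθ₁
      have h2 := abs_le.1 hθ₂
      linarith [h1.1, h2.2]
    have hstep : θ₂ - θ₁ ≤ 2 * ε / c := by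
      rw [le_div_iff₀ hc0]
      nlinarith [hmvt, hub]
    refine le_trans hstep ?_
    have hblog : (0:ℝ) < (b:ℝ) * Real.log m := by positivity
    rw [div_le_div_iff₀ hc0 hblog]
    have hexp : 4*(k:ℝ)*ε*c = 4*ε*((b:ℝ)-ε)*Real.log m := by
      rw [hcdef]; field_simp
    rw [show (4:ℝ)*↑k*ε*c = 4*ε*((b:ℝ)-ε)*Real.log m from hexp]
    have h1 : (0:ℝ) ≤ 2*(b:ℝ) - 4*ε := by linarith
    nlinarith [mul_nonneg (mul_nonneg h1 hε0) hlogm.le]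
  have := volume_le_of_diam_le (s := {θ : ℝ | θ ∈ Set.Icc A B ∧ |f θ - b| ≤ ε})
    (d := 4 * k * ε / (b * Real.log m)) ?_
  · refine le_trans this (le_of_eq ?_)
    congr 1
    ring
  · intro x hx y hy
    rcases le_total x y with h | h
    · rw [abs_sub_comm, abs_of_nonneg (by linarith)]
      exact core x hx y hy h
    · rw [abs_of_nonneg (by linarith)]
      exact core y hy x hx h

lemma harmonic_bound : ∀ N : ℕ, ∑ b ∈ Finset.Icc 1 N, (1:ℝ)/b ≤ 1 + Real.log N := by
  intro N
  induction N with
  | zero => simp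
  | succ n ih =>
    rw [Finset.sum_Icc_succ_top (Nat.one_le_iff_ne_zero.2 (Nat.succ_ne_zero n))]
    rcases Nat.eq_zero_or_pos n with rfl | hn
    · norm_num
    · have hn1 : (1:ℝ) ≤ (n:ℝ) := by exact_mod_cast hn
      have hlogstep : Real.log n - Real.log (n+1) ≤ -(1/((n:ℝ)+1)) := by
        have hpos : (0:ℝ) < (n:ℝ)/((n:ℝ)+1) := by positivity
        have := Real.log_le_sub_one_of_pos hpos
        rw [Real.log_div (by positivity) (by positivity)] at this
        have h2 : (n:ℝ)/((n:ℝ)+1) - 1 = -(1/((n:ℝ)+1)) := by field_simp; ring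
        linarith [h2 ▸ this]
      have : ((n+1:ℕ):ℝ) = (n:ℝ)+1 := by push_cast; ring
      rw [this]
      have : (1:ℝ)/((n:ℝ)+1) ≤ Real.log ((n:ℝ)+1) - Real.log n := by linarith
      linarith [ih]

lemma sum_le_card_mul {k : ℕ} (g : Fin k → ℝ) (C : ℝ) (h : ∀ j, g j ≤ C) :
    ∑ j, g j ≤ (k:ℝ) * C := by
  calc ∑ j, g j ≤ ∑ _j : Fin k, C := Finset.sum_le_sum fun j _ => h j
  _ = (k:ℝ) * C := by rw [Finset.sum_const, Finset.card_univ, Fintype.card_fin, nsmul_eq_mul]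

lemma bsum (k : ℕ) (hk : 1 ≤ k) (ρ : ℕ → ℝ) (hρ : ∀ m, 0 ≤ ρ m)
    (a : Fin k → ℕ) (ha : ∀ j, 1 ≤ a j) (M : ℕ) (hM2 : 2 ≤ M)
    (hMsmall : ∀ m, M ≤ m → ρ m / m ≤ 1/2)
    (hMa : M ≤ Finset.univ.sup a)
    (A B : ℝ) (hA : 0 < A) (hAB : A ≤ B) :
    ∑' b : ℕ, volume {θ : ℝ | θ ∈ Set.Icc A B ∧ 1 ≤ b ∧
        |(∑ j, (a j : ℝ) ^ θ) - b| ≤ ρ (Finset.univ.sup a) / ((Finset.univ.sup a : ℕ):ℝ)^k}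
      ≤ ENNReal.ofReal ((8*k*((1 + Real.log 2 + Real.log k)/Real.log 2 + B))
          * (ρ (Finset.univ.sup a) / ((Finset.univ.sup a : ℕ):ℝ)^k)) := by
  set m := Finset.univ.sup a with hmdef
  haveI : Nonempty (Fin k) := ⟨⟨0, hk⟩⟩
  have hm2 : 2 ≤ m := le_trans hM2 hMa
  have hm2R : (2:ℝ) ≤ (m:ℝ) := by exact_mod_cast hm2
  have hm1R : (1:ℝ) ≤ (m:ℝ) := by linarith
  set ε := ρ m / (m:ℝ)^k with hεdef
  have hε0 : 0 ≤ ε := div_nonneg (hρ m) (by positivity)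
  have hε12 : ε ≤ 1/2 := by
    refine le_trans ?_ (hMsmall m hMa)
    apply div_le_div_of_nonneg_left (hρ m) (by linarith)
    calc (m:ℝ) = (m:ℝ)^1 := (pow_one _).symm
    _ ≤ (m:ℝ)^k := pow_le_pow_right₀ hm1R hk
  have hlog2 : (0:ℝ) < Real.log 2 := Real.log_pos one_lt_two
  have hlogm : 0 < Real.log (m:ℝ) := lt_of_lt_of_le hlog2 (Real.log_le_log (by norm_num) hm2R)
  have hlogk : 0 ≤ Real.log (k:ℝ) := Real.log_nonneg (by exact_mod_cast hk)
  have hB0 : 0 < B := lt_of_lt_of_le hA hAB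
  have hkR : (1:ℝ) ≤ (k:ℝ) := by exact_mod_cast hk
  have hmB1 : (1:ℝ) ≤ (m:ℝ)^B := by
    calc (1:ℝ) = (m:ℝ)^(0:ℝ) := (Real.rpow_zero _).symm
    _ ≤ (m:ℝ)^B := Real.rpow_le_rpow_of_exponent_le hm1R hB0.le
  set N := ⌊(k:ℝ)*(m:ℝ)^B⌋₊ + 1 with hN
  set D := (1 + Real.log 2 + Real.log (k:ℝ))/Real.log 2 + B with hD
  -- sets vanish for b outside Icc 1 N
  have hempty : ∀ b : ℕ, b ∉ Finset.Icc 1 N →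
      {θ : ℝ | θ ∈ Set.Icc A B ∧ 1 ≤ b ∧ |(∑ j, (a j : ℝ) ^ θ) - b| ≤ ε} = ∅ := by
    intro b hb
    rw [Finset.mem_Icc, not_and_or] at hb
    ext θ
    simp only [Set.mem_setOf_eq, Set.mem_empty_iff_false, iff_false]
    rintro ⟨hθI, hb1, habs⟩
    rcases hb with hb | hb
    · exact hb hb1
    · push_neg at hb
      have haj : ∀ j : Fin k, (a j : ℝ) ^ θ ≤ (m:ℝ)^B := by
        intro j
        have h1 : ((a j : ℕ):ℝ) ≤ ((m:ℕ):ℝ) := by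
          exact_mod_cast Finset.le_sup (f := a) (Finset.mem_univ j)
        have h2 : (a j:ℝ)^θ ≤ ((m:ℕ):ℝ)^θ :=
          Real.rpow_le_rpow (Nat.cast_nonneg _) h1 (le_trans hA.le hθI.1)
        have h3 : ((m:ℕ):ℝ)^θ ≤ ((m:ℕ):ℝ)^B := Real.rpow_le_rpow_of_exponent_le hm1R hθI.2
        linarith
      have hfθ : (∑ j, (a j : ℝ) ^ θ) ≤ (k:ℝ) * (m:ℝ)^B := sum_le_card_mul _ _ haj
      have hble : (b:ℝ) ≤ (∑ j, (a j : ℝ) ^ θ) + ε := by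
        linarith [(abs_le.1 habs).1]
      have hNb : ((N:ℕ):ℝ) + 1 ≤ (b:ℝ) := by exact_mod_cast hb
      have hfl : (k:ℝ)*(m:ℝ)^B < ((⌊(k:ℝ)*(m:ℝ)^B⌋₊ : ℕ):ℝ) + 1 :=
        Nat.lt_floor_add_one _
      have : ((N:ℕ):ℝ) = ((⌊(k:ℝ)*(m:ℝ)^B⌋₊ : ℕ):ℝ) + 1 := by rw [hN]; push_cast; ring
      linarith
  calc ∑' b : ℕ, volume {θ : ℝ | θ ∈ Set.Icc A B ∧ 1 ≤ b ∧
        |(∑ j, (a j : ℝ) ^ θ) - b| ≤ ε}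
      = ∑ b ∈ Finset.Icc 1 N, volume {θ : ℝ | θ ∈ Set.Icc A B ∧ 1 ≤ b ∧
        |(∑ j, (a j : ℝ) ^ θ) - b| ≤ ε} :=
        tsum_eq_sum (fun b hb => by rw [hempty b hb]; exact measure_empty)
    _ ≤ ∑ b ∈ Finset.Icc 1 N, ENNReal.ofReal (8 * k * ε / (b * Real.log (m:ℝ))) := by
        apply Finset.sum_le_sum
        intro b hb
        refine le_trans (measure_mono ?_) (key k hk a ha hm2 b (Finset.mem_Icc.1 hb).1
          ε hε0 hε12 A B hA)
        intro θ hθ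
        exact ⟨hθ.1, hθ.2.2⟩
    _ = ENNReal.ofReal (∑ b ∈ Finset.Icc 1 N, 8 * k * ε / (b * Real.log (m:ℝ))) := by
        rw [ENNReal.ofReal_sum_of_nonneg]
        intro b hb
        exact div_nonneg (mul_nonneg (by positivity) hε0)
          (mul_nonneg (Nat.cast_nonneg b) hlogm.le)
    _ ≤ ENNReal.ofReal ((8*k*D) * ε) := by
        apply ENNReal.ofReal_le_ofReal
        have hsum1 : ∑ b ∈ Finset.Icc 1 N, 8 * (k:ℝ) * ε / (b * Real.log (m:ℝ))
            = (8 * (k:ℝ) * ε / Real.log (m:ℝ)) * ∑ b ∈ Finset.Icc 1 N, (1:ℝ)/b := by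
          rw [Finset.mul_sum]
          apply Finset.sum_congr rfl
          intro b hb
          rw [mul_one_div, div_div, mul_comm (Real.log ((m:ℕ):ℝ)) ((b:ℕ):ℝ)]
        rw [hsum1]
        have hharm := harmonic_bound N
        have hlogN : Real.log N ≤ Real.log 2 + Real.log (k:ℝ) + B * Real.log (m:ℝ) := by
          have hNle : ((N:ℕ):ℝ) ≤ 2*((k:ℝ)*(m:ℝ)^B) := by
            have h1 : ((⌊(k:ℝ)*(m:ℝ)^B⌋₊ : ℕ):ℝ) ≤ (k:ℝ)*(m:ℝ)^B :=
              Nat.floor_le (by positivity)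
            have h2 : (1:ℝ) ≤ (k:ℝ)*(m:ℝ)^B := by nlinarith
            have : ((N:ℕ):ℝ) = ((⌊(k:ℝ)*(m:ℝ)^B⌋₊ : ℕ):ℝ) + 1 := by rw [hN]; push_cast; ring
            linarith
          calc Real.log N ≤ Real.log (2*((k:ℝ)*(m:ℝ)^B)) :=
            Real.log_le_log (by positivity) hNle
          _ = Real.log 2 + Real.log (k:ℝ) + B * Real.log (m:ℝ) := by
            rw [Real.log_mul (by norm_num) (by positivity),
              Real.log_mul (by positivity) (by positivity),
              Real.log_rpow (by linarith)]
            ring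
        have hDlog : 1 + Real.log N ≤ D * Real.log (m:ℝ) := by
          have hquot : (1:ℝ) ≤ Real.log (m:ℝ) / Real.log 2 :=
            (one_le_div hlog2).2 (Real.log_le_log (by norm_num) hm2R)
          have hnum : (0:ℝ) ≤ 1 + Real.log 2 + Real.log (k:ℝ) := by linarith
          have expand : D * Real.log (m:ℝ)
              = (1 + Real.log 2 + Real.log (k:ℝ)) * (Real.log (m:ℝ)/Real.log 2)
                + B * Real.log (m:ℝ) := by
            rw [hD]; field_simp
          have h5 : (1 + Real.log 2 + Real.log (k:ℝ))
              ≤ (1 + Real.log 2 + Real.log (k:ℝ)) * (Real.log (m:ℝ)/Real.log 2) := by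
            nlinarith [mul_le_mul_of_nonneg_left hquot hnum]
          rw [expand]
          linarith [h5, hlogN]
        calc (8 * (k:ℝ) * ε / Real.log (m:ℝ)) * ∑ b ∈ Finset.Icc 1 N, (1:ℝ)/b
            ≤ (8 * (k:ℝ) * ε / Real.log (m:ℝ)) * (D * Real.log (m:ℝ)) := by
              apply mul_le_mul_of_nonneg_left _ (by positivity)
              · calc ∑ b ∈ Finset.Icc 1 N, (1:ℝ)/b ≤ 1 + Real.log N := hharm
                _ ≤ D * Real.log (m:ℝ) := hDlog
          _ = (8*k*D) * ε := by field_simp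

lemma asum (k : ℕ) (hk : 1 ≤ k) (ρ : ℕ → ℝ) (hρ : ∀ m, 0 ≤ ρ m)
    (hsum : Summable fun m : ℕ => ρ m / m) (C : ℝ) (hC : 0 ≤ C) :
    ∑' a : Fin k → ℕ, (if (∀ j, 1 ≤ a j) then
        ENNReal.ofReal (C * (ρ (Finset.univ.sup a) / ((Finset.univ.sup a : ℕ):ℝ)^k)) else 0)
      ≠ ⊤ := by
  haveI : Nonempty (Fin k) := ⟨⟨0, hk⟩⟩
  set F : ℕ → ℝ≥0∞ := fun v => ENNReal.ofReal (C * (ρ v / (v:ℝ)^k)) with hF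
  set Φ : Fin k → (Fin k → ℕ) → ℝ≥0∞ := fun j a =>
    if (∀ i, 1 ≤ a i ∧ a i ≤ a j) then F (a j) else 0 with hΦ
  -- pointwise bound
  have hpt : ∀ a : Fin k → ℕ, (if (∀ j, 1 ≤ a j) then F (Finset.univ.sup a) else 0)
      ≤ ∑ j, Φ j a := by
    intro a
    by_cases hcond : ∀ j, 1 ≤ a j
    · rw [if_pos hcond]
      obtain ⟨j₀, -, hj₀⟩ := Finset.exists_mem_eq_sup (Finset.univ : Finset (Fin k))
        Finset.univ_nonempty a
      have hΦj₀ : Φ j₀ a = F (Finset.univ.sup a) := by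
        rw [hΦ]
        simp only
        rw [if_pos, hj₀]
        intro i
        exact ⟨hcond i, hj₀ ▸ Finset.le_sup (Finset.mem_univ i)⟩
      calc F (Finset.univ.sup a) = Φ j₀ a := hΦj₀.symm
      _ ≤ ∑ j, Φ j a := Finset.single_le_sum (f := fun j => Φ j a) (fun j _ => zero_le) (Finset.mem_univ j₀)
    · rw [if_neg hcond]; exact zero_le
  -- bound per j
  have hj : ∀ j : Fin k, ∑' a : Fin k → ℕ, Φ j a
      ≤ ENNReal.ofReal (∑' v : ℕ, C * (ρ v / v)) := by
    intro j
    classical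
    set e := Equiv.funSplitAt j ℕ with he
    rw [← e.symm.tsum_eq (Φ j)]
    have heval : ∀ (v : ℕ) (r : {i // i ≠ j} → ℕ),
        Φ j (e.symm (v, r)) = (if 1 ≤ v then F v else 0) *
          (if (∀ i' : {i // i ≠ j}, 1 ≤ r i' ∧ r i' ≤ v) then 1 else 0) := by
      intro v r
      have hvj : e.symm (v, r) j = v := by simp [he]
      have hvi : ∀ (i : Fin k) (hi : i ≠ j), e.symm (v, r) i = r ⟨i, hi⟩ := by
        intro i hi; simp [he, hi]
      rw [hΦ]
      simp only
      by_cases h1 : (∀ i, 1 ≤ e.symm (v, r) i ∧ e.symm (v, r) i ≤ e.symm (v, r) j)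
      · rw [if_pos h1, hvj]
        have hv1 : 1 ≤ v := by have := (h1 j).1; rwa [hvj] at this
        have hr : ∀ i' : {i // i ≠ j}, 1 ≤ r i' ∧ r i' ≤ v := by
          intro i'
          have := h1 i'.1
          rwa [hvi i'.1 i'.2, hvj] at this
        rw [if_pos hv1, if_pos hr, mul_one]
      · rw [if_neg h1]
        by_cases hv1 : 1 ≤ v
        · by_cases hr : ∀ i' : {i // i ≠ j}, 1 ≤ r i' ∧ r i' ≤ v
          · exfalso
            apply h1
            intro i
            by_cases hi : i = j
            · subst hi; rw [hvj]; exact ⟨hv1, le_refl v⟩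
            · rw [hvi i hi, hvj]; exact hr ⟨i, hi⟩
          · rw [if_neg hr, mul_zero]
        · rw [if_neg hv1, zero_mul]
    calc ∑' p : ℕ × ({i // i ≠ j} → ℕ), Φ j (e.symm p)
        = ∑' v : ℕ, ∑' r : {i // i ≠ j} → ℕ, Φ j (e.symm (v, r)) := ENNReal.tsum_prod'
      _ = ∑' v : ℕ, (if 1 ≤ v then F v else 0) *
            ∑' r : {i // i ≠ j} → ℕ, (if (∀ i' : {i // i ≠ j}, 1 ≤ r i' ∧ r i' ≤ v)
              then (1:ℝ≥0∞) else 0) := by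
          congr 1; funext v
          rw [← ENNReal.tsum_mul_left]
          congr 1; funext r
          exact heval v r
      _ ≤ ∑' v : ℕ, ENNReal.ofReal (C * (ρ v / v)) := by
          apply ENNReal.tsum_le_tsum
          intro v
          have hcount : ∑' r : {i // i ≠ j} → ℕ, (if (∀ i' : {i // i ≠ j}, 1 ≤ r i' ∧ r i' ≤ v)
              then (1:ℝ≥0∞) else 0) = ((v ^ (Fintype.card {i // i ≠ j}) : ℕ) : ℝ≥0∞) := by
            rw [tsum_eq_sum (s := Fintype.piFinset fun _ : {i // i ≠ j} => Finset.Icc 1 v)]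
            · rw [Finset.sum_congr rfl (fun r hr => if_pos ?_), Finset.sum_const,
                Fintype.card_piFinset]
              · simp [Nat.card_Icc]
              · intro i'
                have := (Fintype.mem_piFinset.1 hr) i'
                exact Finset.mem_Icc.1 this
            · intro r hr
              rw [if_neg]
              intro hcon
              exact hr (Fintype.mem_piFinset.2 fun i' => Finset.mem_Icc.2 (hcon i'))
          have hcard : Fintype.card {i : Fin k // i ≠ j} = k - 1 := by
            have := Fintype.card_subtype_compl (fun i : Fin k => i = j)
            simpa [Fintype.card_subtype_eq] using this
          rw [hcount, hcard]
          by_cases hv1 : 1 ≤ v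
          · rw [if_pos hv1, mul_comm]
            calc (((v ^ (k-1) : ℕ)) : ℝ≥0∞) * F v
                = ENNReal.ofReal (((v ^ (k-1) : ℕ) : ℝ) * (C * (ρ v/((v:ℕ):ℝ)^k))) := by
                  rw [hF]
                  simp only
                  rw [← ENNReal.ofReal_natCast (v^(k-1)),
                    ← ENNReal.ofReal_mul (by positivity : (0:ℝ) ≤ ((v ^ (k-1) : ℕ) : ℝ))]
              _ = ENNReal.ofReal (C * (ρ v / v)) := by
                  congr 1
                  have hvk : ((v:ℕ):ℝ)^k = ((v:ℕ):ℝ)^(k-1) * v := by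
                    rw [← pow_succ, Nat.sub_add_cancel hk]
                  have hv0 : ((v:ℕ):ℝ) ≠ 0 := Nat.cast_ne_zero.2 (by omega)
                  rw [hvk]
                  push_cast
                  field_simp
              _ ≤ ENNReal.ofReal (C * (ρ v / v)) := le_refl _
          · rw [if_neg hv1, zero_mul]
            exact zero_le
      _ = ENNReal.ofReal (∑' v : ℕ, C * (ρ v / v)) := by
          rw [ENNReal.ofReal_tsum_of_nonneg]
          · intro v; exact mul_nonneg hC (div_nonneg (hρ v) (Nat.cast_nonneg v))
          · exact hsum.mul_left C
  have hle : (∑' a : Fin k → ℕ, (if (∀ j, 1 ≤ a j) then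
        ENNReal.ofReal (C * (ρ (Finset.univ.sup a) / ((Finset.univ.sup a : ℕ):ℝ)^k)) else 0))
      ≤ ∑ _j : Fin k, ENNReal.ofReal (∑' v : ℕ, C * (ρ v / v)) := by
    calc (∑' a : Fin k → ℕ, (if (∀ j, 1 ≤ a j) then
        ENNReal.ofReal (C * (ρ (Finset.univ.sup a) / ((Finset.univ.sup a : ℕ):ℝ)^k)) else 0))
        ≤ ∑' a : Fin k → ℕ, ∑ j, Φ j a := ENNReal.tsum_le_tsum hpt
      _ = ∑ j, ∑' a : Fin k → ℕ, Φ j a := Summable.tsum_finsetSum (fun j _ => ENNReal.summable)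
      _ ≤ ∑ _j : Fin k, ENNReal.ofReal (∑' v : ℕ, C * (ρ v / v)) :=
          Finset.sum_le_sum fun j _ => hj j
  refine ne_top_of_le_ne_top ?_ hle
  exact (ENNReal.sum_lt_top.2 fun j _ => ENNReal.ofReal_lt_top).ne

def Cond (k : ℕ) (ρ : ℕ → ℝ) (θ : ℝ) (p : (Fin k → ℕ) × ℕ) : Prop :=
  (∀ j, 1 ≤ p.1 j) ∧ 1 ≤ p.2 ∧ |(∑ j, (p.1 j : ℝ) ^ θ) - (p.2 : ℝ)| ≤
    ρ (Finset.univ.sup p.1) / ((Finset.univ.sup p.1 : ℕ) : ℝ) ^ k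

lemma interval (k : ℕ) (hk : 1 ≤ k) (ρ : ℕ → ℝ) (hρ : ∀ m, 0 ≤ ρ m)
    (hsum : Summable fun m : ℕ => ρ m / m) (M : ℕ) (hM2 : 2 ≤ M)
    (hMsmall : ∀ m, M ≤ m → ρ m / m ≤ 1/2)
    (A B : ℝ) (hA : 0 < A) (hAB : A ≤ B) :
    volume {θ : ℝ | θ ∈ Set.Icc A B ∧
      {p : (Fin k → ℕ) × ℕ | Cond k ρ θ p ∧ M ≤ Finset.univ.sup p.1}.Infinite} = 0 := by
  set E : ((Fin k → ℕ) × ℕ) → Set ℝ := fun p =>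
    {θ : ℝ | θ ∈ Set.Icc A B ∧ Cond k ρ θ p ∧ M ≤ Finset.univ.sup p.1} with hE
  set C : ℝ := 8*k*((1 + Real.log 2 + Real.log k)/Real.log 2 + B) with hC
  have hC0 : 0 ≤ C := by
    have hlog2 : (0:ℝ) < Real.log 2 := Real.log_pos one_lt_two
    have hlogk : 0 ≤ Real.log (k:ℝ) := Real.log_nonneg (by exact_mod_cast hk)
    have hB0 : (0:ℝ) < B := lt_of_lt_of_le hA hAB
    have : (0:ℝ) ≤ (1 + Real.log 2 + Real.log k)/Real.log 2 := by positivity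
    positivity
  have htsum : ∑' p : (Fin k → ℕ) × ℕ, volume (E p) ≠ ⊤ := by
    rw [ENNReal.tsum_prod']
    refine ne_top_of_le_ne_top (asum k hk ρ hρ hsum C hC0) (ENNReal.tsum_le_tsum ?_)
    intro a
    by_cases hcond : (∀ j, 1 ≤ a j) ∧ M ≤ Finset.univ.sup a
    · rw [if_pos hcond.1]
      have hstep : ∀ b : ℕ, volume (E (a, b)) ≤ volume {θ : ℝ | θ ∈ Set.Icc A B ∧ 1 ≤ b ∧
          |(∑ j, (a j : ℝ) ^ θ) - b| ≤ ρ (Finset.univ.sup a) / ((Finset.univ.sup a : ℕ):ℝ)^k} := by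
        intro b
        apply measure_mono
        intro θ hθ
        exact ⟨hθ.1, hθ.2.1.2.1, hθ.2.1.2.2⟩
      refine le_trans (ENNReal.tsum_le_tsum hstep)
        (le_trans (bsum k hk ρ hρ a hcond.1 M hM2 hMsmall hcond.2 A B hA hAB) ?_)
      apply le_of_eq; congr 1
    · have : ∀ b : ℕ, E (a, b) = ∅ := by
        intro b
        ext θ
        simp only [hE, Set.mem_setOf_eq, Set.mem_empty_iff_false, iff_false]
        rintro ⟨-, hcd, hM⟩
        exact hcond ⟨hcd.1, hM⟩
      simp only [this, measure_empty, tsum_zero]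
      exact zero_le
  have hae := ae_finite_setOf_mem (μ := volume) htsum
  rw [ae_iff] at hae
  refine measure_mono_null ?_ hae
  rintro θ ⟨hθI, hinf⟩
  simp only [Set.mem_setOf_eq]
  intro hfin
  apply hinf
  refine Set.Finite.subset hfin ?_
  rintro p ⟨h1, h2⟩
  exact ⟨hθI, h1, h2⟩

lemma finite_small (k : ℕ) (hk : 1 ≤ k) (ρ : ℕ → ℝ) (hρ : ∀ m, 0 ≤ ρ m)
    (θ : ℝ) (hθ : 0 < θ) (M : ℕ) :
    {p : (Fin k → ℕ) × ℕ | Cond k ρ θ p ∧ Finset.univ.sup p.1 < M}.Finite := by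
  haveI : Nonempty (Fin k) := ⟨⟨0, hk⟩⟩
  set R : ℝ := ∑ m ∈ Finset.range M, ρ m with hR
  set Nb : ℕ := ⌈(k:ℝ) * (M:ℝ)^θ + R⌉₊ with hNb
  have hAfin : {a : Fin k → ℕ | ∀ j, a j ≤ M}.Finite := by
    refine (Set.Finite.pi (fun i : Fin k => Set.finite_Iic M)).subset ?_
    intro a ha
    rw [Set.mem_pi]
    intro i _
    exact ha i
  refine ((hAfin.prod (Set.finite_Iic Nb)).subset ?_)
  rintro ⟨a, b⟩ ⟨hcd, hsup⟩
  obtain ⟨ha1, hb1, habs⟩ := hcd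
  constructor
  · exact fun j => le_of_lt (lt_of_le_of_lt (Finset.le_sup (Finset.mem_univ j)) hsup)
  · show b ∈ Set.Iic Nb
    set m := Finset.univ.sup a with hm
    have hm1 : 1 ≤ m := le_trans (ha1 ⟨0, hk⟩) (Finset.le_sup (Finset.mem_univ _))
    have hε : ρ m / ((m:ℕ):ℝ)^k ≤ ρ m := by
      apply div_le_self (hρ m)
      exact one_le_pow₀ (by exact_mod_cast hm1)
    have hρR : ρ m ≤ R := by
      rw [hR]
      exact Finset.single_le_sum (fun i _ => hρ i) (Finset.mem_range.2 hsup)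
    have hf : (∑ j, (a j:ℝ)^θ) ≤ (k:ℝ) * (M:ℝ)^θ := by
      apply sum_le_card_mul
      intro j
      apply Real.rpow_le_rpow (Nat.cast_nonneg _) _ hθ.le
      have : a j ≤ M := le_of_lt (lt_of_le_of_lt (Finset.le_sup (Finset.mem_univ j)) hsup)
      exact_mod_cast this
    have hble : (b:ℝ) ≤ (k:ℝ)*(M:ℝ)^θ + R := by
      have h1 := (abs_le.1 habs).1
      have : (b:ℝ) ≤ (∑ j, (a j:ℝ)^θ) + ρ m / ((m:ℕ):ℝ)^k := by linarith
      linarith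
    have : (b:ℝ) ≤ (Nb:ℝ) := le_trans hble (Nat.le_ceil _)
    exact_mod_cast this

end Stmt6Aux

open Stmt6Aux

theorem stmt_6 (k : ℕ) (hk : 1 ≤ k) (ρ : ℕ → ℝ) (hρ : ∀ m, 0 ≤ ρ m)
    (hsum : Summable fun m : ℕ => ρ m / m) :
    volume {θ : ℝ | 0 < θ ∧
      {p : (Fin k → ℕ) × ℕ |
        (∀ j, 1 ≤ p.1 j) ∧ 1 ≤ p.2 ∧
          |(∑ j, (p.1 j : ℝ) ^ θ) - (p.2 : ℝ)| ≤
            ρ (Finset.univ.sup p.1) / ((Finset.univ.sup p.1 : ℕ) : ℝ) ^ k}.Infinite} = 0 := by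
  have htend : Filter.Tendsto (fun m : ℕ => ρ m / m) atTop (nhds 0) := hsum.tendsto_atTop_zero
  have hev : ∀ᶠ m in atTop, ρ m / m ≤ 1/2 :=
    htend.eventually (eventually_le_nhds (by norm_num : (0:ℝ) < 1/2))
  obtain ⟨M₀, hM₀⟩ := Filter.eventually_atTop.1 hev
  set M := max M₀ 2 with hM
  have hM2 : 2 ≤ M := le_max_right _ _
  have hMsmall : ∀ m, M ≤ m → ρ m / m ≤ 1/2 := fun m hm =>
    hM₀ m (le_trans (le_max_left _ _) hm)
  apply measure_mono_null (t := ⋃ n : ℕ, {θ : ℝ | θ ∈ Set.Icc (((n:ℝ)+1)⁻¹) ((n:ℝ)+1) ∧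
      {p : (Fin k → ℕ) × ℕ | Cond k ρ θ p ∧ M ≤ Finset.univ.sup p.1}.Infinite})
  · rintro θ ⟨hθ0, hinf⟩
    obtain ⟨n, hn⟩ := exists_nat_ge (max θ θ⁻¹)
    have hn1 : θ ≤ (n:ℝ) := le_trans (le_max_left _ _) hn
    have hn2 : θ⁻¹ ≤ (n:ℝ) := le_trans (le_max_right _ _) hn
    refine Set.mem_iUnion.2 ⟨n, ?_, ?_⟩
    · constructor
      · have hθinv : 0 < θ⁻¹ := inv_pos.2 hθ0
        have : ((n:ℝ)+1)⁻¹ ≤ (θ⁻¹)⁻¹ := by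
          apply inv_anti₀ hθinv
          linarith
        rwa [inv_inv] at this
      · linarith
    · have hdiff := Set.Infinite.diff hinf (finite_small k hk ρ hρ θ hθ0 M)
      refine hdiff.mono ?_
      rintro p ⟨hp1, hp2⟩
      simp only [Set.mem_setOf_eq] at hp1 hp2 ⊢
      refine ⟨hp1, ?_⟩
      by_contra hlt
      exact hp2 ⟨hp1, not_le.1 hlt⟩
  · apply measure_iUnion_null
    intro n
    apply interval k hk ρ hρ hsum M hM2 hMsmall
    · positivity
    · have h1 : ((n:ℝ)+1)⁻¹ ≤ 1 := by
        rw [inv_le_one_iff₀]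
        right; linarith [Nat.cast_nonneg (α := ℝ) n]
      linarith [Nat.cast_nonneg (α := ℝ) n]
end

section
/- Let k be a positive integer. For almost all θ > 0 (with respect to Lebesgue measure) the following holds: for every ε > 0 there exists a constant C > 0 such that for all positive integers n and all integers a_1, …, a_k with 1 ≤ a_j ≤ n, if Σ_{j=1}^k a_j^θ is not an integer then ‖ Σ_{j=1}^k a_j^θ ‖ ≥ C · n^{−k−ε}. -/
open MeasureTheory Set Filter
open scoped ENNReal NNReal

noncomputable def Bset (k T : ℕ) (q : ℝ) (M : ℕ) : Set ℝ :=
  Set.Ioc (T:ℝ) (T+1) ∩ {θ : ℝ | ∃ a : Fin k → ℕ,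
    (∀ j, 1 ≤ a j ∧ a j ≤ M) ∧ (∃ j, a j = M) ∧
    distNearestInt (∑ j, (a j : ℝ) ^ θ) < (M:ℝ) ^ (-(k:ℝ) - q)}




lemma distNI_pos {x : ℝ} (h : ¬ ∃ m : ℤ, x = (m : ℝ)) : 0 < distNearestInt x := by
  rw [distNearestInt, abs_pos, sub_ne_zero]
  intro hx
  exact h ⟨round x, hx⟩

lemma core_interval (T : ℝ) (f f' : ℝ → ℝ)
    (hder : ∀ x, HasDerivAt f (f' x) x)
    (hmono : Monotone f')
    (hpos : ∀ x, 0 ≤ f' x)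
    (hc : ∀ x, T ≤ x → Real.log 2 ≤ f' x)
    (δ : ℝ) (hδ : 0 < δ) (hδ4 : δ ≤ 1/4) :
    volume {θ : ℝ | θ ∈ Set.Icc T (T+1) ∧ distNearestInt (f θ) < δ}
      ≤ ENNReal.ofReal ((8 + 2 / Real.log 2) * δ) := by
  classical
  set c : ℝ := Real.log 2 with hcdef
  have hc0 : 0 < c := Real.log_pos (by norm_num)
  have hfdiff : Differentiable ℝ f := fun x => (hder x).differentiableAt
  have hfcont : Continuous f := hfdiff.continuous
  have hfmono : Monotone f := by
    apply monotone_of_deriv_nonneg hfdiff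
    intro x; rw [(hder x).deriv]; exact hpos x
  -- the sets S m
  set S : ℤ → Set ℝ := fun m =>
    {θ : ℝ | θ ∈ Set.Icc T (T+1) ∧ (m : ℝ) - δ ≤ f θ ∧ f θ ≤ (m : ℝ) + δ} with hSdef
  have hSsub : ∀ m, S m ⊆ Set.Icc T (T+1) := fun m x hx => hx.1
  have hScl : ∀ m, IsClosed (S m) := by
    intro m
    have : S m = Set.Icc T (T+1) ∩ (f ⁻¹' Set.Icc ((m:ℝ) - δ) ((m:ℝ) + δ)) := by
      ext x; simp [hSdef, Set.mem_Icc, and_assoc]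
    rw [this]
    exact isClosed_Icc.inter (isClosed_Icc.preimage hfcont)
  have hScomp : ∀ m, IsCompact (S m) :=
    fun m => isCompact_Icc.of_isClosed_subset (hScl m) (hSsub m)
  set J : Finset ℤ := Finset.Icc ⌈f T - δ⌉ ⌊f (T+1) + δ⌋ with hJdef
  -- covering
  have hcover : {θ : ℝ | θ ∈ Set.Icc T (T+1) ∧ distNearestInt (f θ) < δ} ⊆
      ⋃ m ∈ J, S m := by
    intro θ hθ
    obtain ⟨hθI, hθd⟩ := hθ
    have habs : |f θ - (round (f θ) : ℝ)| < δ := hθd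
    rw [abs_sub_lt_iff] at habs
    have h1 : (round (f θ) : ℝ) - δ ≤ f θ := by linarith [habs.2]
    have h2 : f θ ≤ (round (f θ) : ℝ) + δ := by linarith [habs.1]
    have hfT : f T ≤ f θ := hfmono hθI.1
    have hfT1 : f θ ≤ f (T+1) := hfmono hθI.2
    refine Set.mem_biUnion (show round (f θ) ∈ J from ?_) ⟨hθI, h1, h2⟩
    rw [hJdef, Finset.mem_Icc]
    constructor
    · rw [Int.ceil_le]; push_cast; linarith
    · rw [Int.le_floor]; push_cast; linarith
  refine le_trans (measure_mono hcover) ?_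
  refine le_trans (measure_biUnion_finset_le J S) ?_
  -- α and β
  set α : ℤ → ℝ := fun m => sInf (S m) with hαdef
  set β : ℤ → ℝ := fun m => sSup (S m) with hβdef
  have hαmem : ∀ m, (S m).Nonempty → α m ∈ S m := fun m h => (hScomp m).sInf_mem h
  have hβmem : ∀ m, (S m).Nonempty → β m ∈ S m := fun m h => (hScomp m).sSup_mem h
  have hsub2 : ∀ m, S m ⊆ Set.Icc (α m) (β m) := by
    intro m x hx
    have hne : (S m).Nonempty := ⟨x, hx⟩
    exact ⟨csInf_le (hScomp m).bddBelow hx, le_csSup (hScomp m).bddAbove hx⟩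
  have hvol : ∀ m, volume (S m) ≤ ENNReal.ofReal (β m - α m) := by
    intro m
    refine le_trans (measure_mono (hsub2 m)) ?_
    rw [Real.volume_Icc]
  -- reduce to nonempty m
  have hzero : ∑ m ∈ J.filter (fun m => (S m).Nonempty), volume (S m) =
      ∑ m ∈ J, volume (S m) := by
    apply Finset.sum_filter_of_ne
    intro m _ hne
    rcases Set.eq_empty_or_nonempty (S m) with h | h
    · exact absurd (by rw [h, measure_empty]) hne
    · exact h
  rw [← hzero]
  set JN : Finset ℤ := J.filter (fun m => (S m).Nonempty) with hJNdef
  have hsplit := Finset.sum_filter_add_sum_filter_not JN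
    (fun m => (m : ℝ) - 1/2 < f T) (fun m => volume (S m))
  rw [← hsplit]
  set J1 : Finset ℤ := JN.filter (fun m => (m:ℝ) - 1/2 < f T) with hJ1def
  set K : Finset ℤ := JN.filter (fun m => ¬ ((m:ℝ) - 1/2 < f T)) with hKdef
  have hJNne : ∀ m ∈ JN, (S m).Nonempty := by
    intro m hm; exact (Finset.mem_filter.mp hm).2
  -- Bound for J1
  have hJ1card : J1.card ≤ 1 := by
    rw [Finset.card_le_one]
    intro m hm m' hm'
    have getb : ∀ p ∈ J1, f T - δ ≤ (p:ℝ) ∧ (p:ℝ) < f T + 1/2 := by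
      intro p hp
      rw [hJ1def, Finset.mem_filter] at hp
      obtain ⟨x, hx⟩ := hJNne p hp.1
      have h1 : f T ≤ f x := hfmono hx.1.1
      have h2 : f x ≤ (p:ℝ) + δ := hx.2.2
      exact ⟨by linarith, by linarith [hp.2]⟩
    obtain ⟨ha1, ha2⟩ := getb m hm
    obtain ⟨hb1, hb2⟩ := getb m' hm'
    by_contra hne
    have h1 : (1:ℝ) ≤ |(m:ℝ) - (m':ℝ)| := by
      exact_mod_cast Int.one_le_abs (sub_ne_zero.mpr hne)
    have h2 : |(m:ℝ) - (m':ℝ)| < 1 := abs_lt.mpr ⟨by linarith, by linarith⟩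
    linarith
  have hJ1term : ∀ m ∈ J1, volume (S m) ≤ ENNReal.ofReal (2 * δ / c) := by
    intro m hm
    rw [hJ1def, Finset.mem_filter] at hm
    have hne := hJNne m hm.1
    refine le_trans (hvol m) (ENNReal.ofReal_le_ofReal ?_)
    rcases le_or_gt (β m) (α m) with hba | hba
    · have : 0 ≤ 2 * δ / c := by positivity
      linarith
    · obtain ⟨ξ, hξ, hslope⟩ := exists_hasDerivAt_eq_slope f f' hba
        hfcont.continuousOn (fun x _ => hder x)
      have hαm := hαmem m hne
      have hβm := hβmem m hne
      have hfξ : c ≤ f' ξ := hc ξ (le_trans hαm.1.1 hξ.1.le)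
      have hfv : f (β m) - f (α m) ≤ 2 * δ := by
        have := hαm.2.1; have := hβm.2.2; linarith
      have heq : f' ξ * (β m - α m) = f (β m) - f (α m) := by
        rw [hslope, div_mul_cancel₀ _ (by linarith : β m - α m ≠ 0)]
      rw [le_div_iff₀ hc0]
      nlinarith [hfξ, hfv, heq, hba]
  have hbound1 : ∑ m ∈ J1, volume (S m) ≤ ENNReal.ofReal (2 * δ / c) := by
    calc ∑ m ∈ J1, volume (S m) ≤ ∑ _m ∈ J1, ENNReal.ofReal (2 * δ / c) :=
          Finset.sum_le_sum hJ1term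
      _ = J1.card • ENNReal.ofReal (2 * δ / c) := by rw [Finset.sum_const]
      _ ≤ 1 • ENNReal.ofReal (2 * δ / c) := smul_le_smul_of_nonneg_right ?_ zero_le
      _ = ENNReal.ofReal (2 * δ / c) := one_smul _ _
    exact_mod_cast hJ1card
  -- main group K
  have hKprop : ∀ m ∈ K, (S m).Nonempty ∧ f T ≤ (m:ℝ) - 1/2 := by
    intro m hm
    rw [hKdef, Finset.mem_filter] at hm
    exact ⟨hJNne m hm.1, not_lt.mp hm.2⟩
  have hex : ∀ m ∈ K, ∃ x, x ∈ Set.Icc T (α m) ∧ f x = (m:ℝ) - 1/2 := by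
    intro m hm
    obtain ⟨hne, hQ⟩ := hKprop m hm
    have hαm := hαmem m hne
    have hTα : T ≤ α m := hαm.1.1
    have hmem : (m:ℝ) - 1/2 ∈ Set.Icc (f T) (f (α m)) := by
      constructor
      · exact hQ
      · have := hαm.2.1; linarith
    obtain ⟨x, hx1, hx2⟩ := intermediate_value_Icc hTα hfcont.continuousOn hmem
    exact ⟨x, hx1, hx2⟩
  choose! γ hγI hγval using hex
  have hγα : ∀ m ∈ K, γ m < α m := by
    intro m hm
    obtain ⟨hne, _⟩ := hKprop m hm
    have hαm := hαmem m hne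
    by_contra h
    have h2 : f (α m) ≤ f (γ m) := hfmono (not_lt.mp h)
    rw [hγval m hm] at h2
    have := hαm.2.1
    linarith
  have hterm : ∀ m ∈ K, volume (S m) ≤ ENNReal.ofReal (8 * δ) * volume (Set.Ioc (γ m) (α m)) := by
    intro m hm
    obtain ⟨hne, _⟩ := hKprop m hm
    have hαm := hαmem m hne
    have hβm := hβmem m hne
    have hga := hγα m hm
    rw [Real.volume_Ioc, ← ENNReal.ofReal_mul (by positivity)]
    refine le_trans (hvol m) (ENNReal.ofReal_le_ofReal ?_)
    rcases le_or_gt (β m) (α m) with hba | hba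
    · nlinarith
    · obtain ⟨ξ, hξ, hslope⟩ := exists_hasDerivAt_eq_slope f f' hba
        hfcont.continuousOn (fun x _ => hder x)
      obtain ⟨η, hη, hslope2⟩ := exists_hasDerivAt_eq_slope f f' hga
        hfcont.continuousOn (fun x _ => hder x)
      have heq : f' ξ * (β m - α m) = f (β m) - f (α m) := by
        rw [hslope, div_mul_cancel₀ _ (by linarith : β m - α m ≠ 0)]
      have heq2 : f' η * (α m - γ m) = f (α m) - f (γ m) := by
        rw [hslope2, div_mul_cancel₀ _ (by linarith : α m - γ m ≠ 0)]
      have hv1 : f (β m) - f (α m) ≤ 2 * δ := by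
        have := hαm.2.1; have := hβm.2.2; linarith
      have hv2 : (1:ℝ)/4 ≤ f (α m) - f (γ m) := by
        rw [hγval m hm]
        have := hαm.2.1; linarith
      have hmo : f' η ≤ f' ξ := hmono (le_trans hη.2.le hξ.1.le)
      -- from f'η (α-γ) ≥ 1/4, f'ξ (β-α) ≤ 2δ, f'η ≤ f'ξ
      have h3 : f' η * (β m - α m) ≤ 2 * δ := by
        calc f' η * (β m - α m) ≤ f' ξ * (β m - α m) :=
              mul_le_mul_of_nonneg_right hmo (by linarith)
          _ = f (β m) - f (α m) := heq
          _ ≤ 2 * δ := hv1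
      nlinarith [mul_le_mul_of_nonneg_right h3 (by linarith : (0:ℝ) ≤ α m - γ m),
        mul_le_mul_of_nonneg_right (hv2.trans heq2.ge) (by linarith : (0:ℝ) ≤ β m - α m)]
  have hdisj : (K : Set ℤ).PairwiseDisjoint (fun m => Set.Ioc (γ m) (α m)) := by
    intro m hm m' hm' hne
    simp only [Function.onFun]
    rw [Set.disjoint_left]
    intro x hx hx'
    have hmK : m ∈ K := hm
    have hm'K : m' ∈ K := hm'
    have key : ∀ p ∈ K, ∀ y ∈ Set.Ioc (γ p) (α p), (p:ℝ) - 1/2 ≤ f y ∧ f y ≤ (p:ℝ) + δ := by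
      intro p hp y hy
      obtain ⟨hnep, _⟩ := hKprop p hp
      have h1 : f (γ p) ≤ f y := hfmono hy.1.le
      have h2 : f y ≤ f (α p) := hfmono hy.2
      rw [hγval p hp] at h1
      have h3 := (hαmem p hnep).2.2
      exact ⟨h1, by linarith⟩
    obtain ⟨k1, k2⟩ := key m hmK x hx
    obtain ⟨k3, k4⟩ := key m' hm'K x hx'
    rcases lt_trichotomy m m' with h | h | h
    · have : (m:ℝ) + 1 ≤ (m':ℝ) := by exact_mod_cast h
      linarith
    · exact hne h
    · have : (m':ℝ) + 1 ≤ (m:ℝ) := by exact_mod_cast h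
      linarith
  have hsum2 : ∑ m ∈ K, volume (Set.Ioc (γ m) (α m)) ≤ 1 := by
    rw [← measure_biUnion_finset hdisj (fun m _ => measurableSet_Ioc)]
    have hss : (⋃ m ∈ K, Set.Ioc (γ m) (α m)) ⊆ Set.Icc T (T+1) := by
      intro x hx
      simp only [Set.mem_iUnion] at hx
      obtain ⟨m, hm, hx⟩ := hx
      obtain ⟨hnem, _⟩ := hKprop m hm
      have h1 : T ≤ γ m := (hγI m hm).1
      have h2 : α m ≤ T + 1 := (hαmem m hnem).1.2
      exact ⟨le_trans h1 hx.1.le, le_trans hx.2 h2⟩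
    refine le_trans (measure_mono hss) ?_
    rw [Real.volume_Icc]
    simp
  have hbound2 : ∑ m ∈ K, volume (S m) ≤ ENNReal.ofReal (8 * δ) := by
    calc ∑ m ∈ K, volume (S m)
        ≤ ∑ m ∈ K, ENNReal.ofReal (8 * δ) * volume (Set.Ioc (γ m) (α m)) :=
          Finset.sum_le_sum hterm
      _ = ENNReal.ofReal (8 * δ) * ∑ m ∈ K, volume (Set.Ioc (γ m) (α m)) := by
          rw [Finset.mul_sum]
      _ ≤ ENNReal.ofReal (8 * δ) * 1 := by
          exact mul_le_mul_right hsum2 _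
      _ = ENNReal.ofReal (8 * δ) := mul_one _
  calc ∑ m ∈ J1, volume (S m) + ∑ m ∈ K, volume (S m)
      ≤ ENNReal.ofReal (2 * δ / c) + ENNReal.ofReal (8 * δ) := add_le_add hbound1 hbound2
    _ = ENNReal.ofReal (2 * δ / c + 8 * δ) := by
        rw [ENNReal.ofReal_add (by positivity) (by positivity)]
    _ = ENNReal.ofReal ((8 + 2 / c) * δ) := by ring_nf


lemma tuple_bound (k : ℕ) (T : ℕ) (a : Fin k → ℕ) (h1 : ∀ j, 1 ≤ a j)
    (j0 : Fin k) (h2 : 2 ≤ a j0) (δ : ℝ) (hδ : 0 < δ) (hδ4 : δ ≤ 1/4) :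
    volume {θ : ℝ | θ ∈ Set.Icc (T:ℝ) (T+1) ∧
        distNearestInt (∑ j, (a j : ℝ) ^ θ) < δ}
      ≤ ENNReal.ofReal ((8 + 2 / Real.log 2) * δ) := by
  set F : ℝ → ℝ := fun θ => ∑ j, (a j : ℝ) ^ θ with hF
  set F' : ℝ → ℝ := fun θ => ∑ j, (a j : ℝ) ^ θ * Real.log (a j) with hF'
  have hpos0 : ∀ j : Fin k, (0:ℝ) < (a j : ℝ) := by
    intro j; exact_mod_cast Nat.lt_of_lt_of_le Nat.zero_lt_one (h1 j)
  have h1' : ∀ j : Fin k, (1:ℝ) ≤ (a j : ℝ) := by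
    intro j; exact_mod_cast h1 j
  have hder : ∀ x, HasDerivAt F (F' x) x := by
    intro x
    exact HasDerivAt.fun_sum fun j _ =>
      (Real.hasStrictDerivAt_const_rpow (hpos0 j) x).hasDerivAt
  have hmono : Monotone F' := by
    intro x y hxy
    apply Finset.sum_le_sum
    intro j _
    have hlog : 0 ≤ Real.log (a j) := Real.log_nonneg (h1' j)
    exact mul_le_mul_of_nonneg_right
      (Real.rpow_le_rpow_of_exponent_le (h1' j) hxy) hlog
  have hpos : ∀ x, 0 ≤ F' x := by
    intro x
    apply Finset.sum_nonneg
    intro j _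
    exact mul_nonneg (Real.rpow_nonneg (hpos0 j).le _) (Real.log_nonneg (h1' j))
  have hc : ∀ x, (T:ℝ) ≤ x → Real.log 2 ≤ F' x := by
    intro x hx
    have hx0 : (0:ℝ) ≤ x := le_trans (by positivity) hx
    have hterm : Real.log 2 ≤ (a j0 : ℝ) ^ x * Real.log (a j0) := by
      have ha2 : (2:ℝ) ≤ (a j0 : ℝ) := by exact_mod_cast h2
      have e1 : (1:ℝ) ≤ (a j0 : ℝ) ^ x := Real.one_le_rpow (h1' j0) hx0
      have e2 : Real.log 2 ≤ Real.log (a j0) := Real.log_le_log (by norm_num) ha2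
      calc Real.log 2 = 1 * Real.log 2 := (one_mul _).symm
        _ ≤ (a j0 : ℝ) ^ x * Real.log (a j0) :=
            mul_le_mul e1 e2 (Real.log_nonneg (by norm_num)) (by positivity)
    refine le_trans hterm ?_
    exact Finset.single_le_sum (fun j _ =>
      mul_nonneg (Real.rpow_nonneg (hpos0 j).le _) (Real.log_nonneg (h1' j)))
      (Finset.mem_univ j0)
  exact core_interval (T:ℝ) F F' hder hmono hpos hc δ hδ hδ4

lemma card_V (k M : ℕ) (hM : 1 ≤ M) :
    (((Fintype.piFinset fun _ : Fin k => Finset.Icc 1 M)).filter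
        (fun a => ∃ j, a j = M)).card ≤ k * M ^ (k - 1) := by
  classical
  have hsub : ((Fintype.piFinset fun _ : Fin k => Finset.Icc 1 M)).filter
        (fun a => ∃ j, a j = M)
      ⊆ Finset.univ.biUnion fun j : Fin k =>
        ((Fintype.piFinset fun _ : Fin k => Finset.Icc 1 M)).filter fun a => a j = M := by
    intro a ha
    rw [Finset.mem_filter] at ha
    obtain ⟨j, hj⟩ := ha.2
    exact Finset.mem_biUnion.mpr ⟨j, Finset.mem_univ _, Finset.mem_filter.mpr ⟨ha.1, hj⟩⟩
  refine le_trans (Finset.card_le_card hsub) (le_trans Finset.card_biUnion_le ?_)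
  have hone : ∀ j : Fin k,
      (((Fintype.piFinset fun _ : Fin k => Finset.Icc 1 M)).filter
        (fun a => a j = M)).card ≤ M ^ (k - 1) := by
    intro j
    have heq : ((Fintype.piFinset fun _ : Fin k => Finset.Icc 1 M)).filter
          (fun a => a j = M)
        = Fintype.piFinset (fun i : Fin k => if i = j then {M} else Finset.Icc 1 M) := by
      ext a
      simp only [Finset.mem_filter, Fintype.mem_piFinset]
      constructor
      · rintro ⟨hA, hB⟩ i
        by_cases hij : i = j
        · subst hij; simp [hB]
        · simp [hij, hA i]
      · intro h
        constructor
        · intro i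
          by_cases hij : i = j
          · subst hij
            have := h i
            simp only [eq_self_iff_true, if_true, Finset.mem_singleton] at this
            rw [this]
            exact Finset.mem_Icc.mpr ⟨hM, le_refl M⟩
          · have := h i
            simpa [hij] using this
        · have := h j
          simpa using this
    rw [heq, Fintype.card_piFinset]
    have hj : j ∈ Finset.univ := Finset.mem_univ j
    rw [← Finset.mul_prod_erase Finset.univ _ hj]
    simp only [eq_self_iff_true, if_true, Finset.card_singleton, one_mul]
    have : ∀ i ∈ Finset.univ.erase j,
        ((if i = j then ({M} : Finset ℕ) else Finset.Icc 1 M)).card = M := by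
      intro i hi
      rw [if_neg (Finset.mem_erase.mp hi).1, Nat.card_Icc]; omega
    rw [Finset.prod_congr rfl this, Finset.prod_const,
      Finset.card_erase_of_mem hj, Finset.card_univ, Fintype.card_fin]
  calc ∑ j : Fin k, (((Fintype.piFinset fun _ : Fin k => Finset.Icc 1 M)).filter
        (fun a => a j = M)).card ≤ ∑ _j : Fin k, M ^ (k-1) :=
        Finset.sum_le_sum fun j _ => hone j
    _ = k * M ^ (k-1) := by rw [Finset.sum_const, Finset.card_univ, Fintype.card_fin, smul_eq_mul]



lemma Bset_bound (k T : ℕ) (hk : 1 ≤ k) (q : ℝ) (hq : 0 < q) (M : ℕ) (hM : 4 ≤ M) :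
    volume (Bset k T q M) ≤
      ENNReal.ofReal ((k * (8 + 2 / Real.log 2)) * (M:ℝ) ^ (-1 - q)) := by
  classical
  have hM0 : (0:ℝ) < (M:ℝ) := by exact_mod_cast lt_of_lt_of_le (by norm_num) hM
  have hM1 : (1:ℝ) ≤ (M:ℝ) := by exact_mod_cast le_trans (by norm_num) hM
  set δ : ℝ := (M:ℝ) ^ (-(k:ℝ) - q) with hδdef
  have hδpos : 0 < δ := Real.rpow_pos_of_pos hM0 _
  have hδ4 : δ ≤ 1/4 := by
    have h1 : δ ≤ (M:ℝ) ^ (-1:ℝ) := by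
      apply Real.rpow_le_rpow_of_exponent_le hM1
      have : (1:ℝ) ≤ (k:ℝ) := by exact_mod_cast hk
      linarith
    have h2 : (M:ℝ) ^ (-1:ℝ) = ((M:ℝ))⁻¹ := Real.rpow_neg_one _
    have h3 : ((M:ℝ))⁻¹ ≤ 1/4 := by
      rw [inv_le_comm₀ hM0 (by norm_num)]
      norm_num
      exact_mod_cast hM
    linarith
  set V : Finset (Fin k → ℕ) := ((Fintype.piFinset fun _ : Fin k => Finset.Icc 1 M)).filter
    (fun a => ∃ j, a j = M) with hVdef
  have hcover : Bset k T q M ⊆ ⋃ a ∈ V, {θ : ℝ | θ ∈ Set.Icc (T:ℝ) (T+1) ∧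
      distNearestInt (∑ j, (a j : ℝ) ^ θ) < δ} := by
    rintro θ ⟨hθI, a, hab, hmax, hdist⟩
    have haV : a ∈ V := by
      rw [hVdef, Finset.mem_filter, Fintype.mem_piFinset]
      exact ⟨fun j => Finset.mem_Icc.mpr (hab j), hmax⟩
    exact Set.mem_biUnion haV ⟨⟨hθI.1.le, hθI.2⟩, hdist⟩
  refine le_trans (measure_mono hcover) (le_trans (measure_biUnion_finset_le V _) ?_)
  have hterm : ∀ a ∈ V, volume {θ : ℝ | θ ∈ Set.Icc (T:ℝ) (T+1) ∧
      distNearestInt (∑ j, (a j : ℝ) ^ θ) < δ}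
      ≤ ENNReal.ofReal ((8 + 2 / Real.log 2) * δ) := by
    intro a ha
    rw [hVdef, Finset.mem_filter, Fintype.mem_piFinset] at ha
    obtain ⟨j0, hj0⟩ := ha.2
    have h1 : ∀ j, 1 ≤ a j := fun j => (Finset.mem_Icc.mp (ha.1 j)).1
    have h2 : 2 ≤ a j0 := by omega
    exact tuple_bound k T a h1 j0 h2 δ hδpos hδ4
  calc ∑ a ∈ V, volume {θ : ℝ | θ ∈ Set.Icc (T:ℝ) (T+1) ∧
        distNearestInt (∑ j, (a j : ℝ) ^ θ) < δ}
      ≤ ∑ _a ∈ V, ENNReal.ofReal ((8 + 2 / Real.log 2) * δ) := Finset.sum_le_sum hterm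
    _ = (V.card : ℝ≥0∞) * ENNReal.ofReal ((8 + 2 / Real.log 2) * δ) := by
        rw [Finset.sum_const, nsmul_eq_mul]
    _ ≤ ((k * M ^ (k-1) : ℕ) : ℝ≥0∞) * ENNReal.ofReal ((8 + 2 / Real.log 2) * δ) := by
        gcongr
        exact_mod_cast card_V k M (by omega)
    _ = ENNReal.ofReal (((k * M ^ (k-1) : ℕ) : ℝ) * ((8 + 2 / Real.log 2) * δ)) := by
        rw [ENNReal.ofReal_mul (by positivity : (0:ℝ) ≤ ((k * M ^ (k-1) : ℕ) : ℝ)),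
          ENNReal.ofReal_natCast, ENNReal.ofReal_mul (by positivity)]
    _ ≤ ENNReal.ofReal ((k * (8 + 2 / Real.log 2)) * (M:ℝ) ^ (-1 - q)) := by
        apply ENNReal.ofReal_le_ofReal
        apply le_of_eq
        have hpow : ((M:ℝ)) ^ ((k:ℝ) - 1) * δ = (M:ℝ) ^ (-1 - q) := by
          rw [hδdef, ← Real.rpow_add hM0]
          ring_nf
        have hcast : ((M ^ (k-1) : ℕ) : ℝ) = (M:ℝ) ^ ((k:ℝ) - 1) := by
          rw [Nat.cast_pow, ← Real.rpow_natCast (M:ℝ) (k-1)]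
          congr 1
          rw [Nat.cast_sub hk, Nat.cast_one]
        rw [Nat.cast_mul, hcast]
        calc (k:ℝ) * (M:ℝ) ^ ((k:ℝ)-1) * ((8 + 2 / Real.log 2) * δ)
            = (k * (8 + 2 / Real.log 2)) * ((M:ℝ) ^ ((k:ℝ)-1) * δ) := by ring
          _ = (k * (8 + 2 / Real.log 2)) * (M:ℝ) ^ (-1-q) := by rw [hpow]

lemma BC (k T : ℕ) (hk : 1 ≤ k) (q : ℝ) (hq : 0 < q) :
    volume {θ : ℝ | ∃ᶠ M in atTop, θ ∈ Bset k T q M} = 0 := by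
  apply measure_setOf_frequently_eq_zero
  set c2 : ℝ := k * (8 + 2 / Real.log 2) with hc2
  have hc2nn : 0 ≤ c2 := by
    have : 0 < Real.log 2 := Real.log_pos (by norm_num)
    positivity
  have hle : ∀ M : ℕ, volume {θ | θ ∈ Bset k T q M} ≤
      (if M < 4 then 1 else 0) + ENNReal.ofReal (c2 * (M:ℝ) ^ (-1 - q)) := by
    intro M
    rcases lt_or_ge M 4 with h | h
    · rw [if_pos h]
      have : volume {θ | θ ∈ Bset k T q M} ≤ volume (Set.Ioc (T:ℝ) (T+1)) :=
        measure_mono fun θ hθ => hθ.1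
      rw [Real.volume_Ioc] at this
      refine le_trans this (le_trans ?_ le_self_add)
      simp
    · rw [if_neg (not_lt.mpr h)]
      refine le_trans (Bset_bound k T hk q hq M h) ?_
      exact le_add_self
  refine ne_top_of_le_ne_top ?_ (ENNReal.tsum_le_tsum hle)
  rw [ENNReal.tsum_add]
  apply ENNReal.add_ne_top.mpr
  constructor
  · have : ∑' M : ℕ, (if M < 4 then (1:ℝ≥0∞) else 0) =
        ∑ M ∈ Finset.range 4, (if M < 4 then (1:ℝ≥0∞) else 0) := by
      apply tsum_eq_sum
      intro b hb
      rw [if_neg (by simpa using hb)]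
    rw [this]
    simp
  · have hsum : Summable (fun M : ℕ => c2 * (M:ℝ) ^ (-1 - q)) :=
      (Real.summable_nat_rpow.mpr (by linarith)).mul_left c2
    rw [← ENNReal.ofReal_tsum_of_nonneg (fun M => by positivity) hsum]
    exact ENNReal.ofReal_ne_top




lemma pointwise (k : ℕ) (hk : 1 ≤ k) (T : ℕ) (q : ℝ) (hq : 0 < q) (θ : ℝ)
    (hθI : θ ∈ Set.Ioc (T:ℝ) ((T:ℝ)+1))
    (hfail : ∀ C : ℝ, 0 < C → ∃ n : ℕ, 0 < n ∧ ∃ a : Fin k → ℕ,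
      (∀ j, 1 ≤ a j ∧ a j ≤ n) ∧ (¬ ∃ m : ℤ, (∑ j, (a j : ℝ) ^ θ) = (m : ℝ)) ∧
      distNearestInt (∑ j, (a j : ℝ) ^ θ) < C * (n:ℝ) ^ (-(k:ℝ) - q)) :
    ∃ᶠ M in atTop, θ ∈ Bset k T q M := by
  classical
  haveI : Nonempty (Fin k) := Fin.pos_iff_nonempty.mp hk
  rw [frequently_atTop]
  intro N
  set D : Finset ℝ := (((Fintype.piFinset fun _ : Fin k => Finset.Icc 1 N)).filter
    (fun a => ¬ ∃ m : ℤ, (∑ j, (a j : ℝ) ^ θ) = (m:ℝ))).image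
    (fun a => distNearestInt (∑ j, (a j : ℝ) ^ θ)) with hD
  set C : ℝ := if h : D.Nonempty then min 1 (D.min' h) else 1 with hC
  have hC1 : C ≤ 1 := by
    rw [hC]; split
    · exact min_le_left _ _
    · exact le_refl 1
  have hCpos : 0 < C := by
    rw [hC]; split
    case isTrue h =>
      apply lt_min one_pos
      obtain ⟨d, hmem, hd⟩ : ∃ d ∈ D, d = D.min' h := ⟨D.min' h, D.min'_mem h, rfl⟩
      rw [hD, Finset.mem_image] at hmem
      obtain ⟨a, ha, hval⟩ := hmem
      rw [Finset.mem_filter] at ha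
      rw [← hd, ← hval]
      exact distNI_pos ha.2
    case isFalse => exact one_pos
  have hCle : ∀ a : Fin k → ℕ, (∀ j, 1 ≤ a j ∧ a j ≤ N) →
      (¬ ∃ m : ℤ, (∑ j, (a j : ℝ) ^ θ) = (m:ℝ)) →
      C ≤ distNearestInt (∑ j, (a j : ℝ) ^ θ) := by
    intro a hab hnon
    have hmem : distNearestInt (∑ j, (a j : ℝ) ^ θ) ∈ D := by
      rw [hD, Finset.mem_image]
      refine ⟨a, ?_, rfl⟩
      rw [Finset.mem_filter, Fintype.mem_piFinset]
      exact ⟨fun j => Finset.mem_Icc.mpr (hab j), hnon⟩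
    have hne : D.Nonempty := ⟨_, hmem⟩
    rw [hC, dif_pos hne]
    exact le_trans (min_le_right _ _) (D.min'_le _ hmem)
  obtain ⟨n, hn, a, hab, hnonint, hlt⟩ := hfail C hCpos
  set M := Finset.univ.sup a with hM
  have hMn : M ≤ n := Finset.sup_le fun j _ => (hab j).2
  have hn1 : (1:ℝ) ≤ (n:ℝ) := by exact_mod_cast hn
  have hexp : -(k:ℝ) - q ≤ 0 := by
    have : (0:ℝ) ≤ (k:ℝ) := Nat.cast_nonneg k
    linarith
  have hr1 : (n:ℝ) ^ (-(k:ℝ)-q) ≤ 1 :=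
    Real.rpow_le_one_of_one_le_of_nonpos hn1 hexp
  obtain ⟨j0, _, hj0⟩ := Finset.exists_mem_eq_sup Finset.univ Finset.univ_nonempty a
  have hNM : N < M := by
    by_contra hle
    push_neg at hle
    have haN : ∀ j, a j ≤ N := fun j =>
      le_trans (Finset.le_sup (Finset.mem_univ j)) hle
    have h1 := hCle a (fun j => ⟨(hab j).1, haN j⟩) hnonint
    have h2 : distNearestInt (∑ j, (a j : ℝ) ^ θ) < C := by
      calc distNearestInt (∑ j, (a j : ℝ) ^ θ) < C * (n:ℝ) ^ (-(k:ℝ)-q) := hlt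
        _ ≤ C * 1 := mul_le_mul_of_nonneg_left hr1 hCpos.le
        _ = C := mul_one _
    linarith
  have hMpos : 0 < M := lt_of_le_of_lt (Nat.zero_le N) hNM
  have hMr : (0:ℝ) < (M:ℝ) := by exact_mod_cast hMpos
  refine ⟨M, le_of_lt hNM, hθI, a, fun j => ⟨(hab j).1, Finset.le_sup (Finset.mem_univ j)⟩,
    ⟨j0, hj0.symm⟩, ?_⟩
  calc distNearestInt (∑ j, (a j : ℝ) ^ θ) < C * (n:ℝ) ^ (-(k:ℝ)-q) := hlt
    _ ≤ 1 * (n:ℝ) ^ (-(k:ℝ)-q) := mul_le_mul_of_nonneg_right hC1 (Real.rpow_nonneg (by positivity) _)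
    _ = (n:ℝ) ^ (-(k:ℝ)-q) := one_mul _
    _ ≤ (M:ℝ) ^ (-(k:ℝ)-q) := by
        apply Real.rpow_le_rpow_of_nonpos hMr (by exact_mod_cast hMn) hexp

theorem stmt_7 (k : ℕ) (hk : 1 ≤ k) :
    volume {θ : ℝ | 0 < θ ∧
      ¬ (∀ ε : ℝ, 0 < ε → ∃ C : ℝ, 0 < C ∧
          ∀ (n : ℕ), 0 < n → ∀ a : Fin k → ℕ, (∀ j, 1 ≤ a j ∧ a j ≤ n) →
            (¬ ∃ m : ℤ, (∑ j, (a j : ℝ) ^ θ) = (m : ℝ)) →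
              distNearestInt (∑ j, (a j : ℝ) ^ θ) ≥ C * (n : ℝ) ^ (-(k : ℝ) - ε))} = 0 := by
  classical
  set Z : ℕ × ℚ → Set ℝ := fun p => if 0 < p.2 then
    {θ : ℝ | ∃ᶠ M in atTop, θ ∈ Bset k p.1 (p.2 : ℝ) M} else ∅ with hZ
  have hZnull : ∀ p, volume (Z p) = 0 := by
    intro p
    rw [hZ]
    dsimp only
    split
    case isTrue h => exact BC k p.1 hk (p.2 : ℝ) (by exact_mod_cast h)
    case isFalse => exact measure_empty
  refine measure_mono_null ?_ (measure_iUnion_null hZnull)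
  intro θ hθ
  obtain ⟨hθpos, hθbad⟩ := hθ
  push_neg at hθbad
  obtain ⟨ε, hε, hfail⟩ := hθbad
  obtain ⟨q, hq0, hqε⟩ := exists_rat_btwn hε
  have hq0' : 0 < q := by exact_mod_cast hq0
  -- T
  set T : ℕ := ⌈θ⌉₊ - 1 with hT
  have hceil : 1 ≤ ⌈θ⌉₊ := Nat.one_le_ceil_iff.mpr hθpos
  have hTcast : (T:ℝ) = (⌈θ⌉₊ : ℝ) - 1 := by
    rw [hT]
    push_cast [Nat.cast_sub hceil]
    ring
  have hθI : θ ∈ Set.Ioc (T:ℝ) ((T:ℝ)+1) := by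
    constructor
    · rw [hTcast]
      have := Nat.ceil_lt_add_one hθpos.le
      linarith
    · rw [hTcast]
      have := Nat.le_ceil θ
      linarith
  refine Set.mem_iUnion.mpr ⟨(T, q), ?_⟩
  rw [hZ]
  dsimp only
  rw [if_pos hq0']
  apply pointwise k hk T (q:ℝ) (by exact_mod_cast hq0' : (0:ℝ) < (q:ℝ)) θ hθI
  intro C hC
  obtain ⟨n, hn, a, hab, hnonint, hdist⟩ := hfail C hC
  refine ⟨n, hn, a, hab, not_exists.mpr hnonint, ?_⟩
  have hlt : distNearestInt (∑ j, (a j : ℝ) ^ θ) < C * (n:ℝ) ^ (-(k:ℝ) - ε) := hdist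
  refine lt_of_lt_of_le hlt ?_
  apply mul_le_mul_of_nonneg_left _ hC.le
  apply Real.rpow_le_rpow_of_exponent_le (by exact_mod_cast hn)
  linarith
end

section
/- Let Φ : ℕ → ℝ_{>0} be any function taking positive real values. Then the set of real numbers θ > 0 such that the inequality 0 < ‖ n^θ ‖ ≤ Φ(n) has infinitely many solutions in positive integers n is an uncountable set which is dense in (0, ∞). -/
/-!
A Baire category argument. For each `N` the exponents `θ` with `0 < ‖n ^ θ‖ < Φ n` for some
`n > N` form an open set, and it is dense in `(0, ∞)`: for large `n` the map `θ ↦ n ^ θ` sweeps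
any short interval `[a, b]` onto an interval of length `> 2`, which contains a point at distance
`δ ∈ (0, Φ n)` above an integer. The intersection over `N` is a dense `G_δ` set of exponents
admitting infinitely many such `n`, and a residual set meets every nonempty open set in
uncountably many points.
-/

open Set Filter Topology

theorem not_countable_inter_of_mem_residual {E : Type*} [NormedAddCommGroup E] [NormedSpace ℝ E]
    [CompleteSpace E] [Nontrivial E] {S T o : Set E} (hT : T ∈ residual E) (ho : IsOpen o)
    (hne : o.Nonempty) (hTS : T ∩ o ⊆ S) : ¬ (S ∩ o).Countable := by
  intro hc
  have hcompl : (S ∩ o)ᶜ ∈ residual E := residual_of_dense_Gδ hc.isGδ_compl (hc.dense_compl ℝ)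
  obtain ⟨x, hxo, hxT, hxS⟩ :=
    (dense_of_mem_residual (inter_mem hT hcompl)).inter_open_nonempty o ho hne
  exact hxS ⟨hTS ⟨hxT, hxo⟩, hxo⟩

theorem distNearestInt_eq_norm (x : ℝ) : distNearestInt x = ‖(x : UnitAddCircle)‖ :=
  UnitAddCircle.norm_eq.symm

theorem continuous_distNearestInt : Continuous distNearestInt := by
  rw [funext distNearestInt_eq_norm]
  exact continuous_norm.comp (AddCircle.continuous_mk' 1)

theorem distNearestInt_intCast_add (m : ℤ) {δ : ℝ} (hδ : |δ| < 1 / 2) :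
    distNearestInt (m + δ) = |δ| := by
  obtain ⟨hδl, hδr⟩ := abs_lt.1 hδ
  rw [distNearestInt, round_intCast_add, round_eq_zero_iff.2 ⟨hδl.le, hδr⟩]
  simp

def approxSet (Φ : ℕ → ℝ) (N : ℕ) : Set ℝ :=
  ⋃ n > N, (fun θ : ℝ => distNearestInt ((n : ℝ) ^ θ)) ⁻¹' Ioo 0 (Φ n)

def infinitelyApproxSet (Φ : ℕ → ℝ) : Set ℝ :=
  {θ : ℝ | 0 < θ ∧
    {n : ℕ | 0 < n ∧ 0 < distNearestInt ((n : ℝ) ^ θ) ∧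
      distNearestInt ((n : ℝ) ^ θ) ≤ Φ n}.Infinite}

section

variable {Φ : ℕ → ℝ}

theorem isOpen_approxSet (Φ : ℕ → ℝ) (N : ℕ) : IsOpen (approxSet Φ N) := by
  refine isOpen_biUnion fun n hn => isOpen_Ioo.preimage ?_
  have hn0 : (n : ℝ) ≠ 0 := Nat.cast_ne_zero.2 (Nat.ne_zero_of_lt hn)
  exact continuous_distNearestInt.comp (Real.continuous_const_rpow hn0)

theorem approxSet_inter_Ioo_nonempty (hΦ : ∀ n, 0 < Φ n) (N : ℕ) {a b : ℝ} (ha : 0 ≤ a)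
    (hab : a < b) : (approxSet Φ N ∩ Ioo a b).Nonempty := by
  obtain ⟨n, hnN, hn4⟩ : ∃ n : ℕ, N < n ∧ 4 ≤ (n : ℝ) ^ (b - a) :=
    ((eventually_gt_atTop N).and (((tendsto_rpow_atTop (sub_pos.2 hab)).comp
      tendsto_natCast_atTop_atTop).eventually_ge_atTop 4)).exists
  have hn1 : (1 : ℝ) ≤ n := by exact_mod_cast Nat.one_le_of_lt hnN
  have hna : 1 ≤ (n : ℝ) ^ a := Real.one_le_rpow hn1 ha
  have hnb : (n : ℝ) ^ b = (n : ℝ) ^ a * (n : ℝ) ^ (b - a) := by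
    rw [← Real.rpow_add (by linarith), add_sub_cancel]
  set m : ℤ := ⌈(n : ℝ) ^ a⌉
  have hm : (n : ℝ) ^ a ≤ m ∧ (m : ℝ) < (n : ℝ) ^ a + 1 := ⟨Int.le_ceil _, Int.ceil_lt_add_one _⟩
  obtain ⟨δ, hδ, hδmin⟩ := exists_between (lt_min (hΦ n) one_half_pos)
  have hδΦ : δ < Φ n := hδmin.trans_le (min_le_left _ _)
  have hδ2 : δ < 1 / 2 := hδmin.trans_le (min_le_right _ _)
  -- `m + δ` lies strictly between `n ^ a` and `n ^ b ≥ 4 n ^ a`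
  obtain ⟨θ, hθ, hθm⟩ : (m + δ : ℝ) ∈ (fun θ : ℝ => (n : ℝ) ^ θ) '' Ioo a b :=
    intermediate_value_Ioo hab.le (Real.continuous_const_rpow (by positivity)).continuousOn
      ⟨by linarith, by nlinarith⟩
  refine ⟨θ, mem_biUnion hnN ?_, hθ⟩
  simp only [mem_preimage, hθm, distNearestInt_intCast_add m (abs_lt.2 ⟨by linarith, hδ2⟩),
    abs_of_pos hδ]
  exact ⟨hδ, hδΦ⟩

-- Adjoining `Iio 0` makes these open sets dense in all of `ℝ`, so Baire's theorem applies in `ℝ`.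
theorem dense_approxSet_union_Iio (hΦ : ∀ n, 0 < Φ n) (N : ℕ) :
    Dense (approxSet Φ N ∪ Iio 0) := by
  refine dense_iff_exists_between.2 fun a b hab => ?_
  rcases lt_or_ge a 0 with ha | ha
  · obtain ⟨c, hac, hc⟩ := exists_between (lt_min hab ha)
    exact ⟨c, Or.inr (hc.trans_le (min_le_right _ _)), hac, hc.trans_le (min_le_left _ _)⟩
  · obtain ⟨θ, hθU, hθab⟩ := approxSet_inter_Ioo_nonempty hΦ N ha hab
    exact ⟨θ, Or.inl hθU, hθab⟩

theorem iInter_approxSet_inter_Ioi_subset (Φ : ℕ → ℝ) :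
    (⋂ N, approxSet Φ N ∪ Iio 0) ∩ Ioi 0 ⊆ infinitelyApproxSet Φ := by
  rintro θ ⟨hθU, hθ : 0 < θ⟩
  refine ⟨hθ, infinite_of_forall_exists_gt fun N => ?_⟩
  obtain hN | hN := mem_iInter.1 hθU N
  · obtain ⟨n, hnN, hn, hnΦ⟩ := mem_iUnion₂.1 hN
    exact ⟨n, ⟨Nat.zero_lt_of_lt hnN, hn, hnΦ.le⟩, hnN⟩
  · exact absurd hN (not_lt.2 hθ.le)

theorem iInter_approxSet_union_Iio_mem_residual (hΦ : ∀ n, 0 < Φ n) :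
    (⋂ N, approxSet Φ N ∪ Iio 0) ∈ residual ℝ :=
  countable_iInter_mem.2 fun N =>
    residual_of_dense_open ((isOpen_approxSet Φ N).union isOpen_Iio)
      (dense_approxSet_union_Iio hΦ N)

theorem not_countable_infinitelyApproxSet_inter (hΦ : ∀ n, 0 < Φ n) {o : Set ℝ} (ho : IsOpen o)
    (hne : (o ∩ Ioi 0).Nonempty) : ¬ (infinitelyApproxSet Φ ∩ (o ∩ Ioi 0)).Countable :=
  not_countable_inter_of_mem_residual (iInter_approxSet_union_Iio_mem_residual hΦ)
    (ho.inter isOpen_Ioi) hne fun _ ⟨hθU, _, hθ⟩ => iInter_approxSet_inter_Ioi_subset Φ ⟨hθU, hθ⟩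

end

theorem stmt_8 (Φ : ℕ → ℝ) (hΦ : ∀ n, 0 < Φ n) :
    ¬ ({θ : ℝ | 0 < θ ∧
        {n : ℕ | 0 < n ∧ 0 < distNearestInt ((n : ℝ) ^ θ) ∧
          distNearestInt ((n : ℝ) ^ θ) ≤ Φ n}.Infinite}).Countable ∧
    Set.Ioi (0 : ℝ) ⊆ closure {θ : ℝ | 0 < θ ∧
        {n : ℕ | 0 < n ∧ 0 < distNearestInt ((n : ℝ) ^ θ) ∧
          distNearestInt ((n : ℝ) ^ θ) ≤ Φ n}.Infinite} := by
  change ¬ (infinitelyApproxSet Φ).Countable ∧ Ioi 0 ⊆ closure (infinitelyApproxSet Φ)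
  constructor
  · exact fun hc => not_countable_infinitelyApproxSet_inter hΦ isOpen_univ
      ⟨1, trivial, mem_Ioi.2 one_pos⟩ (hc.mono inter_subset_left)
  · refine fun x hx => mem_closure_iff.2 fun o ho hxo => ?_
    obtain ⟨θ, hθ, hθo, -⟩ : (infinitelyApproxSet Φ ∩ (o ∩ Ioi 0)).Nonempty :=
      nonempty_iff_ne_empty.2 fun h =>
        not_countable_infinitelyApproxSet_inter hΦ ho ⟨x, hxo, hx⟩ (h ▸ countable_empty)
    exact ⟨θ, hθo, hθ⟩
end

section
/- There exist uncountably many transcendental real numbers τ > 0 such that the inequality 0 < ‖ n^τ ‖ ≤ 2^{−n} has infinitely many solutions in positive integers n. -/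
open Set Filter Topology

lemma distNearestInt_intCast_add_s9 (m : ℤ) {f : ℝ} (h0 : -(1 / 2) ≤ f) (h1 : f < 1 / 2) :
    distNearestInt (m + f) = |f| := by
  rw [distNearestInt, add_comm, round_add_intCast, round_eq_zero_iff.2 ⟨h0, h1⟩]
  simp

def justAboveInt (ε : ℝ) : Set ℝ := ⋃ m : ℤ, Ioo (m : ℝ) (m + ε)

lemma isOpen_justAboveInt (ε : ℝ) : IsOpen (justAboveInt ε) :=
  isOpen_iUnion fun _ => isOpen_Ioo

lemma distNearestInt_pos_lt_of_mem_justAboveInt {ε x : ℝ} (hε : ε ≤ 1 / 2)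
    (hx : x ∈ justAboveInt ε) : 0 < distNearestInt x ∧ distNearestInt x < ε := by
  obtain ⟨m, hm, hmε⟩ := mem_iUnion.1 hx
  have hx : x = m + (x - m) := by ring
  rw [hx, distNearestInt_intCast_add_s9 m (by linarith) (by linarith), abs_of_pos (by linarith)]
  constructor <;> linarith

lemma exists_mem_Ioo_rpow_mem_justAboveInt {b u v ε : ℝ} (hb : 1 < b) (hε : 0 < ε)
    (hgap : b ^ u + 1 + ε ≤ b ^ v) : ∃ τ ∈ Ioo u v, b ^ τ ∈ justAboveInt ε := by
  set m : ℤ := ⌊b ^ u⌋ + 1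
  have hm : b ^ u < m := by push_cast [m]; exact Int.lt_floor_add_one _
  have hm' : (m : ℝ) ≤ b ^ u + 1 := by push_cast [m]; linarith [Int.floor_le (b ^ u)]
  have hbu : 0 < b ^ u := Real.rpow_pos_of_pos (zero_lt_one.trans hb) u
  have hbτ : b ^ Real.logb b (m + ε / 2) = m + ε / 2 :=
    Real.rpow_logb (by linarith) hb.ne' (by linarith)
  refine ⟨Real.logb b (m + ε / 2), ⟨?_, ?_⟩, ?_⟩
  · rw [← Real.rpow_lt_rpow_left_iff hb, hbτ]; linarith
  · rw [← Real.rpow_lt_rpow_left_iff hb, hbτ]; linarith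
  · exact mem_iUnion.2 ⟨m, by rw [hbτ]; constructor <;> linarith⟩

lemma tendsto_rpow_sub_rpow_atTop {u v : ℝ} (hu : 0 ≤ u) (huv : u < v) :
    Tendsto (fun x : ℝ => x ^ v - x ^ u) atTop atTop := by
  refine tendsto_atTop_mono' atTop ?_
    (tendsto_atTop_add_const_right _ (-1) (tendsto_rpow_atTop (sub_pos.2 huv)))
  filter_upwards [eventually_ge_atTop 1] with x hx
  have hsplit : x ^ v = x ^ u * x ^ (v - u) := by
    rw [← Real.rpow_add (by linarith), add_sub_cancel]
  have hxu := Real.one_le_rpow hx hu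
  have hxvu := Real.one_le_rpow hx (sub_pos.2 huv).le
  nlinarith

def exponentsJustAboveInt (n : ℕ) : Set ℝ := {τ | (n : ℝ) ^ τ ∈ justAboveInt ((2 : ℝ) ^ n)⁻¹}

lemma isOpen_exponentsJustAboveInt {n : ℕ} (hn : n ≠ 0) : IsOpen (exponentsJustAboveInt n) :=
  (isOpen_justAboveInt _).preimage (Real.continuous_const_rpow (Nat.cast_ne_zero.2 hn))

lemma distNearestInt_pos_le_of_mem_exponentsJustAboveInt {n : ℕ} (hn : 1 ≤ n) {τ : ℝ}
    (hτ : τ ∈ exponentsJustAboveInt n) :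
    0 < distNearestInt ((n : ℝ) ^ τ) ∧ distNearestInt ((n : ℝ) ^ τ) ≤ ((2 : ℝ) ^ n)⁻¹ := by
  have hε : ((2 : ℝ) ^ n)⁻¹ ≤ 1 / 2 :=
    one_div (2 : ℝ) ▸ inv_anti₀ two_pos (le_self_pow₀ one_le_two (by omega))
  obtain ⟨hpos, hlt⟩ := distNearestInt_pos_lt_of_mem_justAboveInt hε hτ
  exact ⟨hpos, hlt.le⟩

lemma dense_Iio_union_exponentsJustAboveInt (N : ℕ) :
    Dense (Iio 0 ∪ ⋃ n > N, exponentsJustAboveInt n) := by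
  intro x
  rcases lt_or_ge x 0 with hx | hx
  · exact subset_closure (Or.inl hx)
  refine closure_mono subset_union_right (Metric.mem_closure_iff.2 fun δ hδ => ?_)
  obtain ⟨n, hgap, hnN⟩ := ((((tendsto_rpow_sub_rpow_atTop hx (lt_add_of_pos_right x hδ)).comp
    tendsto_natCast_atTop_atTop).eventually_ge_atTop 2).and (eventually_gt_atTop (N + 1))).exists
  have hn : (1 : ℝ) < n := by exact_mod_cast (by omega : 1 < n)
  have hε : ((2 : ℝ) ^ n)⁻¹ ≤ 1 := inv_le_one_of_one_le₀ (one_le_pow₀ one_le_two)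
  have hgap : (n : ℝ) ^ x + 1 + ((2 : ℝ) ^ n)⁻¹ ≤ (n : ℝ) ^ (x + δ) := by
    simp only [Function.comp_apply] at hgap; linarith
  obtain ⟨τ, ⟨hxτ, hτδ⟩, hτ⟩ := exists_mem_Ioo_rpow_mem_justAboveInt hn (by positivity) hgap
  refine ⟨τ, mem_iUnion₂.2 ⟨n, by omega, hτ⟩, ?_⟩
  rw [Real.dist_eq, abs_sub_comm, abs_of_pos (by linarith)]
  linarith

lemma eventually_residual_frequently_mem_exponentsJustAboveInt :
    ∀ᶠ τ in residual ℝ, 0 ≤ τ → ∃ᶠ n in atTop, τ ∈ exponentsJustAboveInt n := by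
  have hopen (N : ℕ) : IsOpen (Iio 0 ∪ ⋃ n > N, exponentsJustAboveInt n) :=
    isOpen_Iio.union <| isOpen_iUnion fun n => isOpen_iUnion fun hn =>
      isOpen_exponentsJustAboveInt (by omega)
  have hW : ∀ᶠ τ in residual ℝ, ∀ N : ℕ, τ ∈ Iio 0 ∪ ⋃ n > N, exponentsJustAboveInt n :=
    eventually_countable_forall.2 fun N =>
      residual_of_dense_open (hopen N) (dense_Iio_union_exponentsJustAboveInt N)
  filter_upwards [hW] with τ hτ hτ0
  refine frequently_atTop'.2 fun N => ?_
  simpa using (hτ N).resolve_left (not_lt.2 hτ0)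

lemma eventually_residual_transcendental : ∀ᶠ x in residual ℝ, Transcendental ℚ x :=
  residual_of_dense_Gδ (Algebraic.countable ℚ ℝ).isGδ_compl
    ((Algebraic.countable ℚ ℝ).dense_compl ℝ)

lemma not_countable_of_eventually_residual {s U : Set ℝ} (hU : IsOpen U) (hne : U.Nonempty)
    (h : ∀ᶠ x in residual ℝ, x ∈ U → x ∈ s) : ¬ s.Countable := by
  intro hs
  obtain ⟨x, ⟨hxs, hxs'⟩, hxU⟩ := (dense_of_mem_residual
    (h.and (residual_of_dense_Gδ hs.isGδ_compl (hs.dense_compl ℝ)))).exists_mem_open hU hne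
  exact hxs' (hxs hxU)

theorem stmt_9 :
    ¬ ({τ : ℝ | 0 < τ ∧ Transcendental ℚ τ ∧
        {n : ℕ | 0 < n ∧ 0 < distNearestInt ((n : ℝ) ^ τ) ∧
          distNearestInt ((n : ℝ) ^ τ) ≤ ((2 : ℝ) ^ n)⁻¹}.Infinite}).Countable := by
  refine not_countable_of_eventually_residual isOpen_Ioi ⟨1, mem_Ioi.2 one_pos⟩ ?_
  filter_upwards [eventually_residual_transcendental,
    eventually_residual_frequently_mem_exponentsJustAboveInt] with τ htr hgood (hτ : 0 < τ)
  refine ⟨hτ, htr, Nat.frequently_atTop_iff_infinite.1 ?_⟩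
  refine ((hgood hτ.le).and_eventually (eventually_gt_atTop 0)).mono fun n ⟨hn, hpos⟩ => ?_
  exact ⟨hpos, distNearestInt_pos_le_of_mem_exponentsJustAboveInt hpos hn⟩
end

section
/- Let d ≥ 2 and ξ ≥ 1 be integers and let P_ξ^* be the set of integers of the form ∏_{j=1}^ξ p_j^{a_j} with each a_j ∈ {0, 1, …, d−1}, excluding 1, where p_j is the j-th prime. For every positive integer n there exists a function c : P_ξ^* → ℤ, not identically zero, with max_{f ∈ P_ξ^*} |c_f| ≤ n, such that ‖ Σ_{f ∈ P_ξ^*} c_f · f^{1/d} ‖ ≤ n^{−d^ξ + 1}. -/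
/-!
This is Dirichlet's pigeonhole argument. Set `N = #P_ξ^* = d^ξ - 1`. The `(n + 1)^N`
linear forms `∑ v_f f^{1/d}` with `v_f ∈ {0, …, n}` have fractional parts in `[0, 1)`, which
we cut into `n^N` intervals of length `n^{-N}`. Two of the forms fall into the same interval, and
their difference has coefficients `c_f = v_f - w_f` with `|c_f| ≤ n`, not all zero, and lies
within `n^{-N}` of an integer.
-/

/-- `PstarSet d ξ` : the set of integers ∏_{j=1}^ξ p_j^{a_j} with a_j ∈ {0,…,d−1},
excluding 1, where p_j is the j-th prime. -/
noncomputable def PstarSet (d ξ : ℕ) : Finset ℕ :=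
  (Finset.image
    (fun a : Fin ξ → Fin d => ∏ j : Fin ξ, (Nat.nth Nat.Prime (j : ℕ)) ^ ((a j : ℕ)))
    Finset.univ).erase 1

open Finset

section PrimePowers

variable {ι : Type*} [Fintype ι] {p : ι → ℕ}

lemma Nat.factorization_prod_pow_of_injective_prime (hp : ∀ i, (p i).Prime)
    (hinj : Function.Injective p) (e : ι → ℕ) (i : ι) :
    (∏ j, p j ^ e j).factorization (p i) = e i := by
  classical
  rw [Nat.factorization_prod fun j _ => pow_ne_zero _ (hp j).ne_zero, Finset.sum_apply']
  simp_rw [(hp _).factorization_pow, Finsupp.single_apply, hinj.eq_iff]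
  simp

lemma Nat.prod_pow_injective_of_injective_prime (hp : ∀ i, (p i).Prime)
    (hinj : Function.Injective p) :
    Function.Injective fun e : ι → ℕ => ∏ j, p j ^ e j := fun e e' h =>
  funext fun i => by
    simpa only [Nat.factorization_prod_pow_of_injective_prime hp hinj] using
      congr_arg (fun m : ℕ => m.factorization (p i)) h

end PrimePowers

lemma card_PstarSet {d : ℕ} (hd : 0 < d) (ξ : ℕ) : #(PstarSet d ξ) = d ^ ξ - 1 := by
  have hinj : Function.Injective
      fun a : Fin ξ → Fin d => ∏ j : Fin ξ, (Nat.nth Nat.Prime (j : ℕ)) ^ ((a j : ℕ)) :=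
    (Nat.prod_pow_injective_of_injective_prime (fun j => Nat.prime_nth_prime _)
        ((Nat.nth_injective Nat.infinite_setOfPred_prime).comp Fin.val_injective)).comp
      fun a b h => funext fun j => Fin.ext (congr_fun h j)
  have hone : 1 ∈ Finset.image
      (fun a : Fin ξ → Fin d => ∏ j : Fin ξ, (Nat.nth Nat.Prime (j : ℕ)) ^ ((a j : ℕ)))
      Finset.univ :=
    Finset.mem_image.mpr ⟨fun _ => ⟨0, hd⟩, Finset.mem_univ _, by simp⟩
  rw [PstarSet, card_erase_of_mem hone, card_image_of_injective _ hinj, card_univ,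
    Fintype.card_fun, Fintype.card_fin, Fintype.card_fin]

lemma distNearestInt_sub_le_abs_fract_sub (x y : ℝ) :
    distNearestInt (x - y) ≤ |Int.fract x - Int.fract y| := by
  have h : x - y - ((⌊x⌋ - ⌊y⌋ : ℤ) : ℝ) = Int.fract x - Int.fract y := by
    rw [Int.fract, Int.fract]; push_cast; ring
  exact h ▸ round_le (x - y) (⌊x⌋ - ⌊y⌋)

lemma exists_ne_distNearestInt_sub_lt {κ : Type*} [Fintype κ] (x : κ → ℝ) {m : ℕ}
    (hm : 0 < m) (hcard : m < Fintype.card κ) :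
    ∃ a b, a ≠ b ∧ distNearestInt (x a - x b) < (m : ℝ)⁻¹ := by
  have hm' : (0 : ℝ) < m := Nat.cast_pos.mpr hm
  let box : κ → ℤ := fun a => ⌊(m : ℝ) * Int.fract (x a)⌋
  have hbox : ∀ a ∈ (univ : Finset κ), box a ∈ Ico (0 : ℤ) m := fun a _ => by
    rw [mem_Ico, Int.floor_nonneg, Int.floor_lt]
    exact ⟨by positivity, by simpa using mul_lt_of_lt_one_right hm' (Int.fract_lt_one _)⟩
  obtain ⟨a, -, b, -, hab, hsame⟩ := exists_ne_map_eq_of_card_lt_of_maps_to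
    (by simpa using hcard) hbox
  refine ⟨a, b, hab, (distNearestInt_sub_le_abs_fract_sub _ _).trans_lt ?_⟩
  have h := Int.abs_sub_lt_one_of_floor_eq_floor hsame
  rw [← mul_sub, abs_mul, abs_of_pos hm'] at h
  rw [← one_div, lt_div_iff₀ hm']
  linarith

theorem exists_int_linear_form_distNearestInt_lt {ι : Type*} [Fintype ι] [Nonempty ι]
    (α : ι → ℝ) {n : ℕ} (hn : 0 < n) :
    ∃ c : ι → ℤ, c ≠ 0 ∧ (∀ i, (c i).natAbs ≤ n) ∧
      distNearestInt (∑ i, c i * α i) < ((n : ℝ) ^ Fintype.card ι)⁻¹ := by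
  classical
  have hcard : n ^ Fintype.card ι < Fintype.card (ι → Fin (n + 1)) := by
    rw [Fintype.card_fun, Fintype.card_fin]
    exact Nat.pow_lt_pow_left n.lt_succ_self Fintype.card_ne_zero
  obtain ⟨v, w, hvw, hlt⟩ := exists_ne_distNearestInt_sub_lt
    (fun v : ι → Fin (n + 1) => ∑ i, ((v i : ℕ) : ℝ) * α i) (pow_pos hn _) hcard
  refine ⟨fun i => (v i : ℕ) - (w i : ℕ), fun h => hvw (funext fun i => ?_), fun i => ?_, ?_⟩
  · exact Fin.ext (by simpa [sub_eq_zero] using congr_fun h i)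
  · dsimp only
    have := (v i).isLt; have := (w i).isLt; omega
  · simpa [← Finset.sum_sub_distrib, sub_mul] using hlt

theorem Finset.exists_int_linear_form_distNearestInt_lt {α : Type*} {s : Finset α}
    (hs : s.Nonempty) (x : α → ℝ) {n : ℕ} (hn : 0 < n) :
    ∃ c : α → ℤ, (∃ i ∈ s, c i ≠ 0) ∧ (∀ i ∈ s, (c i).natAbs ≤ n) ∧
      distNearestInt (∑ i ∈ s, c i * x i) < ((n : ℝ) ^ #s)⁻¹ := by
  classical
  have : Nonempty s := hs.coe_sort
  obtain ⟨c, hc0, hcn, hlt⟩ :=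
    _root_.exists_int_linear_form_distNearestInt_lt (fun i : s => x i) hn
  obtain ⟨i, hi⟩ := Function.ne_iff.mp hc0
  refine ⟨fun a => if h : a ∈ s then c ⟨a, h⟩ else 0, ⟨i, i.2, by simpa using hi⟩,
    fun a ha => by simpa [ha] using hcn ⟨a, ha⟩, ?_⟩
  rw [← Finset.sum_coe_sort s, ← Fintype.card_coe s]
  simpa using hlt

theorem stmt_12 (d ξ : ℕ) (hd : 2 ≤ d) (hξ : 1 ≤ ξ) (n : ℕ) (hn : 1 ≤ n) :
    ∃ c : ℕ → ℤ, (∃ f ∈ PstarSet d ξ, c f ≠ 0) ∧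
      (∀ f ∈ PstarSet d ξ, (c f).natAbs ≤ n) ∧
      distNearestInt (∑ f ∈ PstarSet d ξ, (c f : ℝ) * (f : ℝ) ^ ((d : ℝ)⁻¹)) ≤
        (n : ℝ) ^ (-(d : ℝ) ^ ξ + 1) := by
  have hdξ : 2 ≤ d ^ ξ := hd.trans (Nat.le_self_pow (by omega) d)
  have hcard : #(PstarSet d ξ) = d ^ ξ - 1 := card_PstarSet (by omega) ξ
  obtain ⟨c, hc0, hcn, hlt⟩ := Finset.exists_int_linear_form_distNearestInt_lt
    (card_pos.mp (by rw [hcard]; omega)) (fun f : ℕ => (f : ℝ) ^ ((d : ℝ)⁻¹)) hn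
  refine ⟨c, hc0, hcn, hlt.le.trans_eq ?_⟩
  have hexp : -(d : ℝ) ^ ξ + 1 = -((d ^ ξ - 1 : ℕ) : ℝ) := by
    rw [Nat.cast_sub (by omega)]; push_cast; ring
  rw [hcard, hexp, Real.rpow_neg (Nat.cast_nonneg n), Real.rpow_natCast]
end

section
/- Let 0 < θ < 2 and define G_θ(z) = (1+z)^θ + (1−z)^θ for z ∈ [0,1]. For every ε ∈ (0, 1/2] and every z ∈ [0, ε] one has | G_θ(z) − 2 − θ(θ−1)z² | ≤ 64 ε z² and | G_θ'(z) | ≤ (2θ|θ−1| + 192 ε) · z, where G_θ'(z) = θ(1+z)^{θ−1} − θ(1−z)^{θ−1} is the derivative of G_θ. -/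
lemma aux_plus17 (p t : ℝ) (h1 : 0 < 1 + t) (h2 : 0 < 1 - t) :
    HasDerivAt (fun x : ℝ => (1+x)^p + (1-x)^p) (p*(1+t)^(p-1) - p*(1-t)^(p-1)) t := by
  have A : HasDerivAt (fun x : ℝ => 1 + x) 1 t := by
    simpa using (hasDerivAt_id t).const_add 1
  have B : HasDerivAt (fun x : ℝ => 1 - x) (-1) t := by
    simpa using (hasDerivAt_id t).const_sub 1
  have A' := (Real.hasDerivAt_rpow_const (p := p) (Or.inl h1.ne')).comp t A
  have B' := (Real.hasDerivAt_rpow_const (p := p) (Or.inl h2.ne')).comp t B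
  refine (A'.add B').congr_deriv ?_
  ring

lemma aux_minus17 (p t : ℝ) (h1 : 0 < 1 + t) (h2 : 0 < 1 - t) :
    HasDerivAt (fun x : ℝ => (1+x)^p - (1-x)^p) (p*(1+t)^(p-1) + p*(1-t)^(p-1)) t := by
  have A : HasDerivAt (fun x : ℝ => 1 + x) 1 t := by
    simpa using (hasDerivAt_id t).const_add 1
  have B : HasDerivAt (fun x : ℝ => 1 - x) (-1) t := by
    simpa using (hasDerivAt_id t).const_sub 1
  have A' := (Real.hasDerivAt_rpow_const (p := p) (Or.inl h1.ne')).comp t A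
  have B' := (Real.hasDerivAt_rpow_const (p := p) (Or.inl h2.ne')).comp t B
  refine (A'.sub B').congr_deriv ?_
  ring

theorem stmt_17 (θ : ℝ) (hθ : 0 < θ) (hθ2 : θ < 2) :
    ∀ ε : ℝ, ε ∈ Set.Ioc (0 : ℝ) (1/2) → ∀ z : ℝ, z ∈ Set.Icc (0 : ℝ) ε →
      |(1 + z) ^ θ + (1 - z) ^ θ - 2 - θ * (θ - 1) * z ^ 2| ≤ 64 * ε * z ^ 2 ∧
      |θ * (1 + z) ^ (θ - 1) - θ * (1 - z) ^ (θ - 1)| ≤ (2 * θ * |θ - 1| + 192 * ε) * z := by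
  rintro ε ⟨hε0, hε2⟩ z ⟨hz0, hzε⟩
  have hz2 : z ≤ 1/2 := hzε.trans hε2
  have hsconv : Convex ℝ (Set.Icc (0:ℝ) z) := convex_Icc 0 z
  have h0mem : (0:ℝ) ∈ Set.Icc (0:ℝ) z := ⟨le_refl 0, hz0⟩
  have hzmem : z ∈ Set.Icc (0:ℝ) z := ⟨hz0, le_refl z⟩
  -- basic positivity for t in [0,z]
  have hbase : ∀ t ∈ Set.Icc (0:ℝ) z, 0 < 1 + t ∧ 0 < 1 - t := by
    rintro t ⟨ht0, htz⟩
    constructor <;> nlinarith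
  -- Level 2: f'' (x) = θ(θ-1)((1+x)^(θ-2)+(1-x)^(θ-2)) has derivative bounded by 64
  have hD2 : ∀ t ∈ Set.Icc (0:ℝ) z,
      HasDerivWithinAt (fun x : ℝ => θ*(θ-1)*((1+x)^(θ-2) + (1-x)^(θ-2)))
        (θ*(θ-1)*((θ-2)*(1+t)^(θ-3) - (θ-2)*(1-t)^(θ-3))) (Set.Icc (0:ℝ) z) t := by
    intro t ht
    obtain ⟨h1, h2⟩ := hbase t ht
    have := ((aux_plus17 (θ-2) t h1 h2).const_mul (θ*(θ-1))).hasDerivWithinAt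
      (s := Set.Icc (0:ℝ) z)
    refine this.congr_deriv ?_
    ring_nf
  have hB3 : ∀ t ∈ Set.Icc (0:ℝ) z,
      ‖θ*(θ-1)*((θ-2)*(1+t)^(θ-3) - (θ-2)*(1-t)^(θ-3))‖ ≤ 64 := by
    rintro t ht
    obtain ⟨ht0, htz⟩ := ht
    have h1 : (0:ℝ) < 1 + t := by linarith
    have h2 : (0:ℝ) < 1 - t := by nlinarith
    set X := (1+t)^(θ-3) with hX
    set Y := (1-t)^(θ-3) with hY
    have eX0 : 0 ≤ X := Real.rpow_nonneg (by linarith) _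
    have eX1 : X ≤ 1 := Real.rpow_le_one_of_one_le_of_nonpos (by linarith) (by linarith)
    have eY0 : 0 ≤ Y := Real.rpow_nonneg (by linarith) _
    have eY8 : Y ≤ 8 := by
      have s1 : Y ≤ (1/2:ℝ)^(θ-3) :=
        Real.rpow_le_rpow_of_nonpos (by norm_num) (by nlinarith) (by linarith)
      have s2 : (1/2:ℝ)^(θ-3) ≤ (1/2:ℝ)^(-3:ℝ) :=
        Real.rpow_le_rpow_of_exponent_ge (by norm_num) (by norm_num) (by linarith)
      have s3 : (1/2:ℝ)^(-3:ℝ) = 8 := by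
        rw [show ((-3:ℝ)) = ((-3:ℤ):ℝ) by norm_num, Real.rpow_intCast]
        norm_num
      linarith
    have hXY : |X - Y| ≤ 8 := by
      rw [abs_le]; constructor <;> linarith
    have hcoef : |θ*(θ-1)*(θ-2)| ≤ 8 := by
      rw [abs_le]; constructor <;> nlinarith [sq_nonneg (θ-1), sq_nonneg θ, sq_nonneg (θ-2)]
    calc ‖θ*(θ-1)*((θ-2)*X - (θ-2)*Y)‖ = |θ*(θ-1)*(θ-2)| * |X - Y| := by
            rw [Real.norm_eq_abs, ← abs_mul]; ring_nf
      _ ≤ 8 * 8 := by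
            apply mul_le_mul hcoef hXY (abs_nonneg _) (by norm_num)
      _ ≤ 64 := by norm_num
  -- |f''(t) - f''(0)| ≤ 64 t ≤ 64 z
  have hStepA : ∀ t ∈ Set.Icc (0:ℝ) z,
      ‖θ*(θ-1)*((1+t)^(θ-2) + (1-t)^(θ-2)) - 2*θ*(θ-1)‖ ≤ 64 * z := by
    intro t ht
    have := hsconv.norm_image_sub_le_of_norm_hasDerivWithin_le hD2 hB3 h0mem ht
    have hf0 : θ*(θ-1)*((1+(0:ℝ))^(θ-2) + (1-(0:ℝ))^(θ-2)) = 2*θ*(θ-1) := by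
      norm_num [Real.one_rpow]; ring
    rw [hf0] at this
    calc ‖θ*(θ-1)*((1+t)^(θ-2) + (1-t)^(θ-2)) - 2*θ*(θ-1)‖ ≤ 64 * ‖t - 0‖ := this
      _ ≤ 64 * z := by
          rw [sub_zero, Real.norm_eq_abs, abs_of_nonneg ht.1]
          linarith [ht.2]
  -- Level 1: F2(x) = θ((1+x)^(θ-1) - (1-x)^(θ-1)) - 2θ(θ-1)x
  have hD1 : ∀ t ∈ Set.Icc (0:ℝ) z,
      HasDerivWithinAt (fun x : ℝ => θ*((1+x)^(θ-1) - (1-x)^(θ-1)) - 2*θ*(θ-1)*x)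
        (θ*(θ-1)*((1+t)^(θ-2) + (1-t)^(θ-2)) - 2*θ*(θ-1)) (Set.Icc (0:ℝ) z) t := by
    intro t ht
    obtain ⟨h1, h2⟩ := hbase t ht
    have d1 := (aux_minus17 (θ-1) t h1 h2).const_mul θ
    have d2 : HasDerivAt (fun x : ℝ => 2*θ*(θ-1)*x) (2*θ*(θ-1)) t := by
      simpa using (hasDerivAt_id t).const_mul (2*θ*(θ-1))
    have := (d1.sub d2).hasDerivWithinAt (s := Set.Icc (0:ℝ) z)
    refine this.congr_deriv ?_
    have e1 : θ - 1 - 1 = θ - 2 := by ring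
    rw [e1]; ring
  have hStepB : ∀ t ∈ Set.Icc (0:ℝ) z,
      ‖θ*((1+t)^(θ-1) - (1-t)^(θ-1)) - 2*θ*(θ-1)*t‖ ≤ (64 * z) * z := by
    intro t ht
    have := hsconv.norm_image_sub_le_of_norm_hasDerivWithin_le hD1 hStepA h0mem ht
    have hF0 : θ*((1+(0:ℝ))^(θ-1) - (1-(0:ℝ))^(θ-1)) - 2*θ*(θ-1)*0 = 0 := by
      norm_num [Real.one_rpow]
    rw [hF0, sub_zero] at this
    calc ‖θ*((1+t)^(θ-1) - (1-t)^(θ-1)) - 2*θ*(θ-1)*t‖ ≤ 64 * z * ‖t - 0‖ := this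
      _ ≤ 64 * z * z := by
          rw [sub_zero, Real.norm_eq_abs, abs_of_nonneg ht.1]
          nlinarith [ht.2, hz0]
  -- Level 0: F1(x) = (1+x)^θ + (1-x)^θ - 2 - θ(θ-1)x²
  have hD0 : ∀ t ∈ Set.Icc (0:ℝ) z,
      HasDerivWithinAt (fun x : ℝ => (1+x)^θ + (1-x)^θ - 2 - θ*(θ-1)*x^2)
        (θ*((1+t)^(θ-1) - (1-t)^(θ-1)) - 2*θ*(θ-1)*t) (Set.Icc (0:ℝ) z) t := by
    intro t ht
    obtain ⟨h1, h2⟩ := hbase t ht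
    have d1 := aux_plus17 θ t h1 h2
    have d2 : HasDerivAt (fun x : ℝ => θ*(θ-1)*x^2) (θ*(θ-1)*(2*t)) t := by
      have := ((hasDerivAt_pow 2 t)).const_mul (θ*(θ-1))
      refine this.congr_deriv ?_
      simp
    have := ((d1.sub_const 2).sub d2).hasDerivWithinAt (s := Set.Icc (0:ℝ) z)
    refine this.congr_deriv ?_
    ring
  have hStepC : ‖(1+z)^θ + (1-z)^θ - 2 - θ*(θ-1)*z^2‖ ≤ (64 * z * z) * z := by
    have := hsconv.norm_image_sub_le_of_norm_hasDerivWithin_le hD0 hStepB h0mem hzmem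
    have hF0 : (1+(0:ℝ))^θ + (1-(0:ℝ))^θ - 2 - θ*(θ-1)*(0:ℝ)^2 = 0 := by
      norm_num [Real.one_rpow]
    rw [hF0, sub_zero] at this
    calc ‖(1+z)^θ + (1-z)^θ - 2 - θ*(θ-1)*z^2‖ ≤ 64 * z * z * ‖z - 0‖ := this
      _ = 64 * z * z * z := by
          rw [sub_zero, Real.norm_eq_abs, abs_of_nonneg hz0]
  constructor
  · rw [← Real.norm_eq_abs]
    calc ‖(1 + z) ^ θ + (1 - z) ^ θ - 2 - θ * (θ - 1) * z ^ 2‖ ≤ 64 * z * z * z := hStepC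
      _ ≤ 64 * ε * z ^ 2 := by nlinarith
  · have hB := hStepB z hzmem
    rw [Real.norm_eq_abs] at hB
    have htri : |θ * (1 + z) ^ (θ - 1) - θ * (1 - z) ^ (θ - 1)| ≤
        64 * z * z + |2*θ*(θ-1)*z| := by
      have e : θ * (1 + z) ^ (θ - 1) - θ * (1 - z) ^ (θ - 1) =
          (θ*((1+z)^(θ-1) - (1-z)^(θ-1)) - 2*θ*(θ-1)*z) + 2*θ*(θ-1)*z := by ring
      rw [e]
      exact (abs_add_le _ _).trans (by linarith)
    have habsz : |2*θ*(θ-1)*z| = 2 * θ * |θ-1| * z := by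
      rw [abs_mul, abs_mul, abs_mul]
      rw [abs_of_nonneg hz0, abs_of_nonneg hθ.le]
      norm_num
    rw [habsz] at htri
    have h64 : 64 * z * z ≤ 192 * ε * z := by nlinarith
    calc |θ * (1 + z) ^ (θ - 1) - θ * (1 - z) ^ (θ - 1)|
        ≤ 64 * z * z + 2 * θ * |θ-1| * z := htri
      _ ≤ 192 * ε * z + 2 * θ * |θ-1| * z := by linarith
      _ = (2 * θ * |θ - 1| + 192 * ε) * z := by ring
end

section
/- Let k be a positive integer and let 0 < γ < Υ be real numbers. There exists a constant C > 0 such that for every integer m ≥ C, every β ∈ [γ, Υ], and every tuple of positive integers (a_1, …, a_k) with 1 ≤ a_1 ≤ … ≤ a_k = m, one has Σ_{j=1}^k a_j^{β − 1/log m} ≤ (Σ_{j=1}^k a_j^β) − 1 and Σ_{j=1}^k a_j^{β + 1/log m} ≥ (Σ_{j=1}^k a_j^β) + 1. -/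
theorem stmt_19 (k : ℕ) (hk : 0 < k) (γ Υ : ℝ) (hγ : 0 < γ) (hγΥ : γ < Υ) :
    ∃ C : ℝ, 0 < C ∧ ∀ m : ℕ, C ≤ (m : ℝ) →
      ∀ β : ℝ, β ∈ Set.Icc γ Υ →
        ∀ a : Fin k → ℕ, (∀ j, 1 ≤ a j) → Monotone a →
          a ⟨k - 1, Nat.sub_lt hk one_pos⟩ = m →
            (∑ j, (a j : ℝ) ^ (β - 1 / Real.log m)) ≤ (∑ j, (a j : ℝ) ^ β) - 1 ∧
            (∑ j, (a j : ℝ) ^ (β + 1 / Real.log m)) ≥ (∑ j, (a j : ℝ) ^ β) + 1 := by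
  refine ⟨max 3 ((2:ℝ) ^ (1/γ)), lt_of_lt_of_le (by norm_num) (le_max_left _ _), ?_⟩
  intro m hm β hβ a ha hmono hak
  set i₀ : Fin k := ⟨k - 1, Nat.sub_lt hk one_pos⟩ with hi₀
  have hm3 : (3:ℝ) ≤ m := le_trans (le_max_left _ _) hm
  have hm2 : (2:ℝ) ^ (1/γ) ≤ m := le_trans (le_max_right _ _) hm
  have hm0 : (0:ℝ) < m := lt_of_lt_of_le (by norm_num) hm3
  have hm1 : (1:ℝ) ≤ m := le_trans (by norm_num) hm3
  have hL : 1 < Real.log m := by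
    have h1 : Real.exp 1 < (m:ℝ) :=
      lt_of_lt_of_le (lt_trans Real.exp_one_lt_d9 (by norm_num)) hm3
    have := Real.log_lt_log (Real.exp_pos 1) h1
    rwa [Real.log_exp] at this
  have hLpos : 0 < Real.log m := lt_trans one_pos hL
  have hL0 : Real.log m ≠ 0 := ne_of_gt hLpos
  -- m^β ≥ 2
  have hmγ : (2:ℝ) ≤ (m:ℝ) ^ γ := by
    have h := Real.rpow_le_rpow (Real.rpow_nonneg (by norm_num) _) hm2 hγ.le
    rwa [← Real.rpow_mul (by norm_num), one_div, inv_mul_cancel₀ (ne_of_gt hγ),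
      Real.rpow_one] at h
  have hmβ : (2:ℝ) ≤ (m:ℝ) ^ β :=
    hmγ.trans (Real.rpow_le_rpow_of_exponent_le hm1 hβ.1)
  -- key rpow computations
  have keyneg : (m:ℝ) ^ (β - 1 / Real.log m) = (m:ℝ) ^ β * Real.exp (-1) := by
    rw [Real.rpow_def_of_pos hm0, Real.rpow_def_of_pos hm0, ← Real.exp_add]
    congr 1
    field_simp
    ring
  have keypos : (m:ℝ) ^ (β + 1 / Real.log m) = (m:ℝ) ^ β * Real.exp 1 := by
    rw [Real.rpow_def_of_pos hm0, Real.rpow_def_of_pos hm0, ← Real.exp_add]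
    congr 1
    field_simp
  have hsplit : ∀ f : Fin k → ℝ,
      ∑ j, f j = ∑ j ∈ Finset.univ.erase i₀, f j + f i₀ :=
    fun f => (Finset.sum_erase_add _ _ (Finset.mem_univ _)).symm
  have ha1 : ∀ j, (1:ℝ) ≤ (a j : ℝ) := fun j => by exact_mod_cast ha j
  have he2 : (2:ℝ) ≤ Real.exp 1 := by
    have := Real.add_one_le_exp 1; linarith
  have heinv : Real.exp (-1) ≤ 1/2 := by
    rw [Real.exp_neg, inv_le_comm₀ (Real.exp_pos 1) (by norm_num)]
    linarith
  constructor
  · rw [hsplit fun j => (a j : ℝ) ^ (β - 1 / Real.log m), hsplit fun j => (a j : ℝ) ^ β,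
      hak, keyneg]
    have hterm : ∑ j ∈ Finset.univ.erase i₀, (a j : ℝ) ^ (β - 1 / Real.log m) ≤
        ∑ j ∈ Finset.univ.erase i₀, (a j : ℝ) ^ β := by
      refine Finset.sum_le_sum fun j _ => ?_
      refine Real.rpow_le_rpow_of_exponent_le (ha1 j) ?_
      have : 0 < 1 / Real.log m := by positivity
      linarith
    have hlast : (m:ℝ) ^ β * Real.exp (-1) ≤ (m:ℝ) ^ β - 1 := by
      nlinarith [hmβ, heinv, Real.exp_pos (-1)]
    linarith
  · rw [ge_iff_le, hsplit fun j => (a j : ℝ) ^ (β + 1 / Real.log m),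
      hsplit fun j => (a j : ℝ) ^ β, hak, keypos]
    have hterm : ∑ j ∈ Finset.univ.erase i₀, (a j : ℝ) ^ β ≤
        ∑ j ∈ Finset.univ.erase i₀, (a j : ℝ) ^ (β + 1 / Real.log m) := by
      refine Finset.sum_le_sum fun j _ => ?_
      refine Real.rpow_le_rpow_of_exponent_le (ha1 j) ?_
      have : 0 < 1 / Real.log m := by positivity
      linarith
    have hlast : (m:ℝ) ^ β + 1 ≤ (m:ℝ) ^ β * Real.exp 1 := by
      nlinarith [hmβ, he2]
    linarith
end
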